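/- arXiv:1708.01607 — 11 statements merged into one kernel-verified Lean document; each statement's English description precedes it below -/
import Mathlib

section
/- For every integer m ≥ 3, there exist intersecting families C_1, C_2, ..., C_{m-2} of subsets of [m] = {1,...,m} such that for every subset I ⊆ [m]: if I = ∅ then I belongs to none of the C_j; if I is nonempty and I ≠ [m] then I belongs to exactly |I| - 1 of the families C_j; and [m] belongs to all m-2 of the families C_j. -/
/-!
Order `[m]` and, for a pivot `c`, let `C_c` (`pivotFamily c`) consist of the sets that contain
`c` together with a smaller element, and of the sets whose least missing element is `c`. Two
members of `C_c` meet in `c`, in an element below `c` of one of them (all of which the other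
contains), or, when both miss `c`, in any element below `c`; so `C_c` is intersecting as soon as
`c` is not the least element. A set `I` lies in `C_c` for the `#I - 1` non-least elements `c` of
`I` and, when `I ≠ [m]`, for the least element missing from `I`. The two smallest pivots `0, 1`
account for exactly one of these memberships (`I ∈ C_0 ↔ 0 ∉ I` and `I ∈ C_1 ↔ 0 ∈ I`), and the
remaining `m - 2` pivots give the required counts.
-/

open Finset

section PivotFamily

variable {α : Type*} [LinearOrder α] [Fintype α]

def pivotFamily (c : α) : Finset (Finset α) :=
  {I | (c ∈ I ∧ ∃ y ∈ I, y < c) ∨ (c ∉ I ∧ ∀ y < c, y ∈ I)}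

theorem mem_pivotFamily {c : α} {I : Finset α} :
    I ∈ pivotFamily c ↔ (c ∈ I ∧ ∃ y ∈ I, y < c) ∨ (c ∉ I ∧ ∀ y < c, y ∈ I) := by
  simp [pivotFamily]

theorem intersecting_pivotFamily {c d : α} (hdc : d < c) :
    (pivotFamily c : Set (Finset α)).Intersecting := by
  intro A hA B hB
  rw [not_disjoint_iff_nonempty_inter]
  simp only [mem_coe, mem_pivotFamily] at hA hB
  rcases hA with ⟨hcA, y, hyA, hyc⟩ | ⟨-, hA⟩ <;> rcases hB with ⟨hcB, z, hzB, hzc⟩ | ⟨-, hB⟩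
  · exact ⟨c, mem_inter.2 ⟨hcA, hcB⟩⟩
  · exact ⟨y, mem_inter.2 ⟨hyA, hB y hyc⟩⟩
  · exact ⟨z, mem_inter.2 ⟨hA z hzc, hzB⟩⟩
  · exact ⟨d, mem_inter.2 ⟨hA d hdc, hB d hdc⟩⟩

omit [Fintype α] in
theorem card_filter_exists_lt (I : Finset α) : #{c ∈ I | ∃ y ∈ I, y < c} = #I - 1 := by
  rcases I.eq_empty_or_nonempty with rfl | hI
  · simp
  have : {c ∈ I | ∃ y ∈ I, y < c} = I.erase (I.min' hI) := by
    ext c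
    simp only [mem_filter, mem_erase]
    constructor
    · rintro ⟨hc, y, hy, hyc⟩
      exact ⟨((I.min'_le y hy).trans_lt hyc).ne', hc⟩
    · rintro ⟨hne, hc⟩
      exact ⟨hc, I.min' hI, I.min'_mem hI, I.min'_lt_of_mem_erase_min' hI (mem_erase.2 ⟨hne, hc⟩)⟩
  rw [this, card_erase_of_mem (I.min'_mem hI)]

theorem card_filter_isLeast_compl (I : Finset α) :
    #{c | c ∉ I ∧ ∀ y < c, y ∈ I} = if I = univ then 0 else 1 := by
  split_ifs with hI
  · simp [hI]
  have hIc : Iᶜ.Nonempty := by simpa [nonempty_iff_ne_empty] using hI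
  rw [card_eq_one]
  refine ⟨Iᶜ.min' hIc, ?_⟩
  ext c
  have hleast : c ∉ I ∧ (∀ y < c, y ∈ I) ↔ IsLeast (Iᶜ : Set α) c := by
    simp [IsLeast, lowerBounds, not_imp_comm (a := _ ∈ I)]
  simp only [mem_filter, mem_univ, true_and, mem_singleton, hleast, ← coe_compl]
  exact ⟨fun h => h.unique (Iᶜ.isLeast_min' hIc), fun h => h ▸ Iᶜ.isLeast_min' hIc⟩

theorem card_filter_mem_pivotFamily (I : Finset α) :
    #{c | I ∈ pivotFamily c} = #I - 1 + if I = univ then 0 else 1 := by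
  simp only [mem_pivotFamily]
  rw [filter_or, card_union_of_disjoint, ← card_filter_exists_lt, ← card_filter_isLeast_compl]
  · congr 2
    ext c
    simp
  · exact disjoint_filter.2 fun c _ h1 h2 => h2.1 h1.1

theorem mem_pivotFamily_of_isMin {c : α} (hc : IsMin c) {I : Finset α} :
    I ∈ pivotFamily c ↔ c ∉ I := by
  simp [mem_pivotFamily, hc.not_lt]

theorem mem_pivotFamily_of_Iio_eq {c d : α} (hc : Set.Iio c = {d}) {I : Finset α} :
    I ∈ pivotFamily c ↔ d ∈ I := by
  have hlt : ∀ y, y < c ↔ y = d := fun y => Set.ext_iff.1 hc y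
  simp only [mem_pivotFamily, hlt, exists_eq_right, forall_eq]
  tauto

end PivotFamily

theorem card_filter_mem_pivotFamily_succ_succ {n : ℕ} (I : Finset (Fin (n + 2))) :
    #{j : Fin n | I ∈ pivotFamily j.succ.succ} + 1 = #I - 1 + if I = univ then 0 else 1 := by
  have h := card_filter_mem_pivotFamily I
  rw [Fin.card_filter_univ_succ', Fin.card_filter_univ_succ', Fin.succ_zero_eq_one] at h
  simp only [mem_pivotFamily_of_isMin (c := (0 : Fin (n + 2))) isMin_bot,
    mem_pivotFamily_of_Iio_eq (c := (1 : Fin (n + 2))) (d := 0) (by ext; simp [Fin.lt_one_iff])] at h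
  have h0 : (if 0 ∉ I then 1 else 0) + (if 0 ∈ I then 1 else 0) = 1 := by
    by_cases h0I : 0 ∈ I <;> simp [h0I]
  omega

theorem stmt_1 (m : ℕ) (hm : 3 ≤ m) :
    ∃ C : Fin (m - 2) → Finset (Finset (Fin m)),
      (∀ j, ∀ A ∈ C j, ∀ B ∈ C j, (A ∩ B).Nonempty) ∧
      ∀ I : Finset (Fin m),
        (Finset.univ.filter (fun j => I ∈ C j)).card =
          if I = ∅ then 0 else if I = Finset.univ then m - 2 else I.card - 1 := by
  obtain ⟨n, rfl⟩ := Nat.exists_eq_add_of_le' (by omega : 2 ≤ m)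
  refine ⟨fun j => pivotFamily j.succ.succ, fun j A hA B hB => ?_, fun I => ?_⟩
  · exact not_disjoint_iff_nonempty_inter.1 (intersecting_pivotFamily (Fin.succ_pos _) hA hB)
  have hcount := card_filter_mem_pivotFamily_succ_succ I
  change #{j : Fin n | I ∈ pivotFamily j.succ.succ} =
    if I = ∅ then 0 else if I = univ then n else #I - 1
  rcases eq_or_ne I ∅ with rfl | hE
  · rw [if_neg univ_nonempty.ne_empty.symm, card_empty] at hcount
    rw [if_pos rfl]
    omega
  rcases eq_or_ne I univ with rfl | hU
  · rw [if_pos rfl, card_univ, Fintype.card_fin] at hcount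
    rw [if_neg hE, if_pos rfl]
    omega
  rw [if_neg hU] at hcount
  rw [if_neg hE, if_neg hU]
  omega
end

section
/- For all integers k ≥ r ≥ 3 and 1 ≤ i ≤ k - r + 1, β_i(k, r) ≤ β_i(k-1, r-1) + i + 1. -/
open SimpleGraph

/-- `n` is the number of vertices of a `K_r`-free `k`-partite graph in which
the subgraph induced by any `k - i` parts contains a clique of size `r - 1`. -/
def BetaWitness (i k r n : ℕ) : Prop :=
  ∃ (G : SimpleGraph (Fin n)) (P : Fin n → Fin k),
    (∀ u v, G.Adj u v → P u ≠ P v) ∧ G.CliqueFree r ∧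
    ∀ S : Finset (Fin k), S.card = i →
      ∃ T : Finset (Fin n), G.IsNClique (r - 1) T ∧ ∀ v ∈ T, P v ∉ S

noncomputable def beta (i k r : ℕ) : ℕ := sInf {n | BetaWitness i k r n}

/-!
Take a witness `G` for `β_i(k-1, r-1)` and add a new part together with `i + 1` independent new
vertices: one in the new part and one in each of `i` fixed old parts `J`, every new vertex being
joined to all old vertices outside its own part. A clique contains at most one new vertex, so the
new graph is still `K_r`-free. If the `i` deleted parts do not include the new one, its new vertex
extends a `K_{r-2}` of `G` avoiding them; otherwise at most `i - 1` old parts are deleted, so some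
`j ∈ J` survives, and the new vertex in part `j` extends a `K_{r-2}` of `G` avoiding the deleted
parts and `j`.
-/

open Finset

namespace Finset

variable {ι : Type*}

/-- For a set `S` of parts to delete, `w` is a new vertex whose part survives, and the old parts
that its clique must avoid, `S` and the part of `w`, are still `#S` many. -/
theorem exists_map_notMem_card_eraseNone_insert [DecidableEq ι] {J : Finset ι}
    {S : Finset (Option ι)} (hS : #S ≤ #J) :
    ∃ w : Option J, w.map (↑) ∉ S ∧ #(insert (w.map (↑)) S).eraseNone = #S := by
  suffices ∃ w : Option J, w.map (↑) ∉ S ∧ none ∈ insert (w.map (↑)) S by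
    obtain ⟨w, hwS, hnone⟩ := this
    exact ⟨w, hwS, by rw [card_eraseNone_of_mem hnone, card_insert_of_notMem hwS]; simp⟩
  by_cases hnone : none ∈ S
  · obtain ⟨j, hjJ, hjS⟩ := exists_mem_notMem_of_card_lt_card (s := S.eraseNone) (t := J) <| by
      rw [card_eraseNone_of_mem hnone]
      have := card_pos.2 ⟨_, hnone⟩
      omega
    exact ⟨some ⟨j, hjJ⟩, by simpa using hjS, mem_insert_of_mem hnone⟩
  · exact ⟨none, hnone, mem_insert_self _ _⟩

end Finset

namespace SimpleGraph

variable {V W ι κ : Type*} {i r : ℕ} {G : SimpleGraph V} {P : V → ι}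

structure IsBetaWitness (i r : ℕ) (G : SimpleGraph V) (P : V → ι) : Prop where
  ne_of_adj : ∀ u v, G.Adj u v → P u ≠ P v
  cliqueFree : G.CliqueFree r
  exists_isNClique_avoiding : ∀ S : Finset ι, #S = i →
    ∃ T : Finset V, G.IsNClique (r - 1) T ∧ ∀ v ∈ T, P v ∉ S

lemma IsBetaWitness.map (h : G.IsBetaWitness i r P) (e : V ≃ W) (σ : ι ≃ κ) :
    (G.map e.toEmbedding).IsBetaWitness i r (σ ∘ P ∘ e.symm) where
  ne_of_adj := by
    rintro _ _ ⟨-, u, v, huv, rfl, rfl⟩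
    simpa using h.ne_of_adj u v huv
  cliqueFree := h.cliqueFree.comap (Iso.map e G).isContained'
  exists_isNClique_avoiding S hS := by
    obtain ⟨T, hT, hTS⟩ :=
      h.exists_isNClique_avoiding (S.map σ.symm.toEmbedding) (by simpa using hS)
    refine ⟨T.map e.toEmbedding, hT.map, ?_⟩
    simpa using fun v (hv : e.symm v ∈ T) => hTS _ hv

theorem _root_.betaWitness_iff {k n : ℕ} : BetaWitness i k r n ↔
    ∃ (G : SimpleGraph (Fin n)) (P : Fin n → Fin k), G.IsBetaWitness i r P :=
  ⟨fun ⟨G, P, h₁, h₂, h₃⟩ => ⟨G, P, h₁, h₂, h₃⟩, fun ⟨G, P, h₁, h₂, h₃⟩ => ⟨G, P, h₁, h₂, h₃⟩⟩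

lemma IsBetaWitness.betaWitness [Fintype V] {k : ℕ} (h : G.IsBetaWitness i r P) (σ : ι ≃ Fin k) :
    BetaWitness i k r (Fintype.card V) :=
  betaWitness_iff.2 ⟨_, _, h.map (Fintype.equivFin V) σ⟩

lemma isBetaWitness_prod [Fintype ι] (h : i + r ≤ Fintype.card ι) :
    ((⊤ : SimpleGraph ι).comap Prod.fst ⊓ (⊤ : SimpleGraph (Fin r)).comap Prod.snd).IsBetaWitness
      i (r + 1) Prod.fst where
  ne_of_adj _ _ huv := huv.1
  cliqueFree := Colorable.cliqueFree ⟨Coloring.mk Prod.snd fun huv => huv.2⟩ r.lt_succ_self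
  exists_isNClique_avoiding S hS := by
    classical
    obtain ⟨f⟩ : Nonempty (Fin r ↪ {x // x ∉ S}) :=
      Function.Embedding.nonempty_of_card_le (by simp [Fintype.card_subtype_compl]; omega)
    refine ⟨univ.map ⟨fun a => (f a, a), fun a b hab => congrArg Prod.snd hab⟩, ⟨?_, by simp⟩, ?_⟩
    · simp only [coe_map, coe_univ, Set.image_univ]
      rintro _ ⟨a, rfl⟩ _ ⟨b, rfl⟩ hab
      have hab : a ≠ b := by rintro rfl; exact hab rfl
      exact ⟨Subtype.val_injective.ne (f.injective.ne hab), hab⟩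
    · simp only [mem_map, mem_univ, true_and]
      rintro _ ⟨a, rfl⟩
      exact (f a).2

def joinAcrossParts (G : SimpleGraph V) (P : V → κ) (R : W → κ) : SimpleGraph (V ⊕ W) :=
  G.map Function.Embedding.inl ⊔
    (completeBipartiteGraph V W ⊓ (⊤ : SimpleGraph κ).comap (Sum.elim P R))

section joinAcrossParts

variable {P : V → κ} {R : W → κ}

@[simp] lemma joinAcrossParts_adj_inl_inl {u v : V} :
    (G.joinAcrossParts P R).Adj (.inl u) (.inl v) ↔ G.Adj u v := by
  simp [joinAcrossParts, completeBipartiteGraph]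

@[simp] lemma joinAcrossParts_adj_inl_inr {v : V} {w : W} :
    (G.joinAcrossParts P R).Adj (.inl v) (.inr w) ↔ P v ≠ R w := by
  simp [joinAcrossParts, completeBipartiteGraph]

@[simp] lemma joinAcrossParts_adj_inr_inl {v : V} {w : W} :
    (G.joinAcrossParts P R).Adj (.inr w) (.inl v) ↔ R w ≠ P v := by
  simp [joinAcrossParts, completeBipartiteGraph]

@[simp] lemma joinAcrossParts_adj_inr_inr {w w' : W} :
    ¬ (G.joinAcrossParts P R).Adj (.inr w) (.inr w') := by
  simp [joinAcrossParts, completeBipartiteGraph]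

lemma joinAcrossParts_ne_of_adj (hG : ∀ u v, G.Adj u v → P u ≠ P v) :
    ∀ x y, (G.joinAcrossParts P R).Adj x y → Sum.elim P R x ≠ Sum.elim P R y := by
  rintro (u | w) (v | w') h <;> simp_all

lemma CliqueFree.joinAcrossParts {n : ℕ} (hG : G.CliqueFree n) :
    (G.joinAcrossParts P R).CliqueFree (n + 1) := by
  classical
  intro T hT
  have hright : #T.toRight ≤ 1 := card_le_one.2 fun w hw w' hw' => by
    by_contra hne
    exact joinAcrossParts_adj_inr_inr (hT.1 (mem_toRight.1 hw) (mem_toRight.1 hw') (by simpa))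
  obtain ⟨T₀, hT₀, hT₀card⟩ := exists_subset_card_eq (s := T.toLeft) (n := n)
    (by have := T.card_toLeft_add_card_toRight; have := hT.card_eq; omega)
  refine hG T₀ ⟨fun u hu v hv huv => ?_, hT₀card⟩
  simpa using hT.1 (mem_toLeft.1 (hT₀ hu)) (mem_toLeft.1 (hT₀ hv)) (by simpa)

lemma IsNClique.insert_joinAcrossParts [DecidableEq V] [DecidableEq W] {n : ℕ} {T : Finset V}
    {w : W} (hT : G.IsNClique n T) (hw : ∀ v ∈ T, P v ≠ R w) :
    (G.joinAcrossParts P R).IsNClique (n + 1) (insert (.inr w) (T.map .inl)) := by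
  refine IsNClique.insert ⟨fun x hx y hy hxy => ?_, by simp [hT.2]⟩ ?_
  · simp only [coe_map, Set.mem_image, mem_coe] at hx hy
    obtain ⟨u, hu, rfl⟩ := hx
    obtain ⟨v, hv, rfl⟩ := hy
    simpa using hT.1 hu hv (by simpa using hxy)
  · simp only [mem_map, Function.Embedding.inl_apply]
    rintro _ ⟨v, hv, rfl⟩
    simpa using (hw v hv).symm

end joinAcrossParts

lemma IsBetaWitness.joinAcrossParts (h : G.IsBetaWitness i (r + 1) P) {J : Finset ι}
    (hJ : #J = i) :
    (G.joinAcrossParts (some ∘ P) (Option.map (↑) : Option J → Option ι)).IsBetaWitness i (r + 2)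
      (Sum.elim (some ∘ P) (Option.map (↑))) where
  ne_of_adj := joinAcrossParts_ne_of_adj fun u v huv => by simpa using h.ne_of_adj u v huv
  cliqueFree := h.cliqueFree.joinAcrossParts
  exists_isNClique_avoiding S hS := by
    classical
    obtain ⟨w, hwS, hcard⟩ :=
      exists_map_notMem_card_eraseNone_insert (J := J) (hS.trans hJ.symm).le
    obtain ⟨T, hT, hTS⟩ := h.exists_isNClique_avoiding _ (hcard.trans hS)
    have hTS' : ∀ v ∈ T, some (P v) ∉ insert (w.map (↑)) S := fun v hv => by
      simpa using hTS v hv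
    refine ⟨insert (.inr w) (T.map .inl), hT.insert_joinAcrossParts fun v hv hvw => ?_, ?_⟩
    · exact hTS' v hv (mem_insert.2 (.inl hvw))
    · simp only [mem_insert, mem_map, Function.Embedding.inl_apply]
      rintro _ (rfl | ⟨v, hv, rfl⟩)
      · exact hwS
      · exact fun hvS => hTS' v hv (mem_insert_of_mem hvS)

end SimpleGraph

theorem stmt_3_general (k r i : ℕ) (hr : 3 ≤ r) (hkr : r ≤ k) (hi2 : i ≤ k - r + 1) :
    beta i k r ≤ beta i (k - 1) (r - 1) + i + 1 := by
  obtain ⟨r, rfl⟩ : ∃ r', r = r' + 2 := ⟨r - 2, by omega⟩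
  obtain ⟨k, rfl⟩ : ∃ k', k = k' + 1 := ⟨k - 1, by omega⟩
  simp only [add_tsub_cancel_right]
  have hne : {n | BetaWitness i k (r + 1) n}.Nonempty :=
    ⟨_, (isBetaWitness_prod (ι := Fin k) (by simp; omega)).betaWitness (Equiv.refl _)⟩
  obtain ⟨G, P, hG⟩ := betaWitness_iff.1 (Nat.sInf_mem hne)
  obtain ⟨J, -, hJ⟩ :=
    exists_subset_card_eq (s := (univ : Finset (Fin k))) (n := i) (by simp; omega)
  have hW := (hG.joinAcrossParts hJ).betaWitness (finSuccEquiv k).symm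
  exact Nat.sInf_le (by simpa [beta, hJ, add_assoc] using hW)

theorem stmt_3 (k r i : ℕ) (hr : 3 ≤ r) (hkr : r ≤ k) (hi1 : 1 ≤ i) (hi2 : i ≤ k - r + 1) :
    beta i k r ≤ beta i (k - 1) (r - 1) + i + 1 :=
  stmt_3_general k r i hr hkr hi2
end

section
/- For all integers k ≥ r ≥ 2 and 1 ≤ i ≤ k - r + 1, β_i(k, r) ≤ (i+1)(r-1). -/
/-!
Take the vertices `(a, t)` with `a ≤ i` and `t < r - 1`, put `(a, t)` into part `a + t`, and join
`(a, t)` to `(a', t')` when `t < t'` and `a ≤ a'`. Each row `t = const` is independent, so the graph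
is `(r - 1)`-colourable and hence `K_r`-free, and adjacent vertices lie in different parts because
`a + t < a' + t'`. If `c₀ < c₁ < ⋯` lists the parts outside a set of `i` forbidden ones, then
`c_t - t` is nondecreasing and at most `i`, so the vertices `(c_t - t, t)` form a clique of size
`r - 1` avoiding the forbidden parts.
-/

open SimpleGraph

open Finset

theorem StrictMono.monotone_sub_self {c : ℕ → ℕ} (hc : StrictMono c) :
    Monotone fun t => c t - t :=
  monotone_nat_of_le_succ fun t => by have : c t < c (t + 1) := hc (Nat.lt_add_one t); omega

theorem Finset.infinite_ofPred_notMem {α : Type*} [Infinite α] (S : Finset α) :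
    (Set.ofPred (· ∉ S)).Infinite :=
  S.finite_toSet.infinite_compl

namespace Nat

theorem nth_notMem_le_add_card (S : Finset ℕ) (t : ℕ) : nth (· ∉ S) t ≤ t + #S := by
  have hcount : count (· ∉ S) (nth (· ∉ S) t) = t :=
    count_nth_of_infinite S.infinite_ofPred_notMem t
  have : nth (· ∉ S) t - #S ≤ count (· ∉ S) (nth (· ∉ S) t) := by
    rw [count_eq_card_filter_range, ← sdiff_eq_filter]
    simpa using le_card_sdiff S (range (nth (· ∉ S) t))
  omega

theorem exists_monotone_add_notMem (S : Finset ℕ) {a : ℕ} (hS : #S ≤ a) (b : ℕ) :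
    ∃ f : Fin b → Fin (a + 1), Monotone f ∧ ∀ t, (f t : ℕ) + t ∉ S := by
  have hinf := S.infinite_ofPred_notMem
  have hle : ∀ t, t ≤ nth (· ∉ S) t := fun t => (nth_strictMono hinf).le_apply
  refine ⟨fun t => ⟨nth (· ∉ S) t - t, by have := nth_notMem_le_add_card S t; omega⟩,
    fun s t hst => (nth_strictMono hinf).monotone_sub_self hst, fun t => ?_⟩
  simpa [Nat.sub_add_cancel (hle t)] using nth_mem_of_infinite hinf t

end Nat

theorem BetaWitness.of_fintype {i k r : ℕ} {V : Type*} [Fintype V] (G : SimpleGraph V)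
    (P : V → Fin k) (hP : ∀ u v, G.Adj u v → P u ≠ P v) (hG : G.CliqueFree r)
    (hcl : ∀ S : Finset (Fin k), #S = i →
      ∃ T : Finset V, G.IsNClique (r - 1) T ∧ ∀ v ∈ T, P v ∉ S) :
    BetaWitness i k r (Fintype.card V) := by
  set e := Fintype.equivFin V
  refine ⟨G.map e.toEmbedding, P ∘ e.symm, ?_, hG.comap (Iso.map e G).isContained', ?_⟩
  · rw [← comap_symm]
    exact fun u v h => hP _ _ h
  · intro S hS
    obtain ⟨T, hT, hTS⟩ := hcl S hS
    exact ⟨T.map e.toEmbedding, hT.map, fun v hv => hTS _ (by simpa using hv)⟩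

def staircaseGraph (a b : ℕ) : SimpleGraph (Fin a × Fin b) :=
  fromRel fun u v => u.2 < v.2 ∧ u.1 ≤ v.1

namespace staircaseGraph

variable {a b : ℕ}

theorem val_add_ne_of_adj {u v : Fin a × Fin b} (h : (staircaseGraph a b).Adj u v) :
    (u.1 : ℕ) + u.2 ≠ v.1 + v.2 := by
  have : (u.2 < v.2 ∧ u.1 ≤ v.1) ∨ (v.2 < u.2 ∧ v.1 ≤ u.1) := h.2
  omega

theorem cliqueFree_of_lt {r : ℕ} (hr : b < r) : (staircaseGraph a b).CliqueFree r := by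
  let C : (staircaseGraph a b).Coloring (Fin b) :=
    Coloring.mk Prod.snd fun {u v} h => by
      have : (u.2 < v.2 ∧ u.1 ≤ v.1) ∨ (v.2 < u.2 ∧ v.1 ≤ u.1) := h.2
      omega
  exact C.colorable.cliqueFree (by simpa using hr)

def graphEmbedding (f : Fin b → Fin a) : Fin b ↪ Fin a × Fin b :=
  ⟨fun t => (f t, t), fun _ _ h => (Prod.ext_iff.1 h).2⟩

theorem isNClique_map_graphEmbedding {f : Fin b → Fin a} (hf : Monotone f) :
    (staircaseGraph a b).IsNClique b (univ.map (graphEmbedding f)) := by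
  refine ⟨?_, by simp⟩
  simp only [coe_map, coe_univ, Set.image_univ]
  rintro _ ⟨s, rfl⟩ _ ⟨t, rfl⟩ hne
  have hst : s ≠ t := fun h => hne (h ▸ rfl)
  refine ⟨hne, ?_⟩
  rcases hst.lt_or_gt with h | h
  · exact Or.inl ⟨h, hf h.le⟩
  · exact Or.inr ⟨h, hf h.le⟩

end staircaseGraph

theorem stmt_4_general (k r i : ℕ) (hr : 2 ≤ r) (hkr : r ≤ k) (hi2 : i ≤ k - r + 1) :
    beta i k r ≤ (i + 1) * (r - 1) := by
  let P : Fin (i + 1) × Fin (r - 1) → Fin k := fun v => ⟨v.1 + v.2, by omega⟩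
  have hw : BetaWitness i k r (Fintype.card (Fin (i + 1) × Fin (r - 1))) := by
    refine BetaWitness.of_fintype (staircaseGraph (i + 1) (r - 1)) P
      (fun _ _ h => Fin.ne_of_val_ne (staircaseGraph.val_add_ne_of_adj h))
      (staircaseGraph.cliqueFree_of_lt (by omega)) fun S hS => ?_
    obtain ⟨f, hf, hfS⟩ := Nat.exists_monotone_add_notMem (S.map Fin.valEmbedding) (a := i)
      (by simp [hS]) (r - 1)
    refine ⟨_, staircaseGraph.isNClique_map_graphEmbedding hf, fun v hv hvS => ?_⟩
    obtain ⟨t, -, rfl⟩ := mem_map.1 hv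
    exact hfS t (mem_map_of_mem _ hvS)
  rw [Fintype.card_prod, Fintype.card_fin, Fintype.card_fin] at hw
  exact Nat.sInf_le hw

theorem stmt_4 (k r i : ℕ) (hr : 2 ≤ r) (hkr : r ≤ k) (hi1 : 1 ≤ i) (hi2 : i ≤ k - r + 1) :
    beta i k r ≤ (i + 1) * (r - 1) :=
  stmt_4_general k r i hr hkr hi2
end

section
/- For integers r ≥ 2, i ≥ 2 and k ≥ i(r-1)+1, β_i(k, r) ≤ i(r-1) + 1. In particular, the (r-2)th power of the cycle on i(r-1)+1 vertices (with each vertex in its own part) is K_r-free, and after deleting any i vertices there remain r-1 pairwise adjacent vertices. -/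
open SimpleGraph

/-!
The witness is the `(r-2)`-th power of the cycle on `n = i(r-1)+1` vertices, each vertex in its
own part. It is `K_r`-free: write the vertices of a clique as `v₀ + s` with signed offsets
`|s| ≤ r-2`; two offsets congruent mod `r-1` would put two clique vertices at cyclic distance
exactly `r-1`, which is too far since `n ≥ 2(r-1)`, so a clique has at most `r-1` vertices.
Every arc of `r-1` consecutive vertices is a clique, and `i` deleted vertices meet at most
`i(r-1) < n` of the `n` arcs, so one arc survives.
-/

open Finset

theorem ZMod.exists_forall_add_natCast_notMem {n m : ℕ} [NeZero n] (S : Finset (ZMod n))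
    (h : #S * m < n) : ∃ a : ZMod n, ∀ d < m, a + d ∉ S := by
  classical
  let blocked := S.biUnion fun s => (range m).image fun d : ℕ => s - d
  have hcard : #blocked < #(univ : Finset (ZMod n)) := by
    rw [card_univ, ZMod.card]
    calc #blocked ≤ ∑ s ∈ S, #((range m).image fun d : ℕ => s - d) := card_biUnion_le
      _ ≤ ∑ _s ∈ S, m := sum_le_sum fun _ _ => card_image_le.trans (card_range m).le
      _ = #S * m := by rw [sum_const, smul_eq_mul]
      _ < n := h
  obtain ⟨a, -, ha⟩ := exists_mem_notMem_of_card_lt_card hcard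
  exact ⟨a, fun d hd haS =>
    ha (mem_biUnion.2 ⟨a + d, haS, mem_image.2 ⟨d, mem_range.2 hd, by ring⟩⟩)⟩

namespace SimpleGraph

def cyclePower (p n : ℕ) : SimpleGraph (ZMod n) :=
  fromRel fun u v => ∃ d : ℕ, 1 ≤ d ∧ d ≤ p ∧ u - v = (d : ZMod n)

theorem cyclePower_adj_iff {p n : ℕ} {u v : ZMod n} :
    (cyclePower p n).Adj u v ↔ u ≠ v ∧ ∃ w : ℤ, w.natAbs ≤ p ∧ u - v = w := by
  rw [cyclePower, fromRel_adj]
  refine and_congr_right fun huv => ⟨?_, ?_⟩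
  · rintro (⟨d, -, hd, h⟩ | ⟨d, -, hd, h⟩)
    · exact ⟨d, by omega, by simp [h]⟩
    · exact ⟨-d, by omega, by rw [← neg_sub, h]; simp⟩
  · rintro ⟨w, hw, h⟩
    have hw0 : w ≠ 0 := by
      rintro rfl
      exact huv (sub_eq_zero.1 (by simpa using h))
    rcases lt_or_gt_of_ne hw0 with hneg | hpos
    · refine Or.inr ⟨w.natAbs, by omega, hw, ?_⟩
      rw [← neg_sub, h, ← Int.cast_natCast, ← Int.cast_neg]
      congr 1
      omega
    · refine Or.inl ⟨w.natAbs, by omega, hw, ?_⟩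
      rw [h, ← Int.cast_natCast]
      congr 1
      omega

theorem cyclePower_cliqueFree {p n : ℕ} (hn : 2 * p + 2 ≤ n) :
    (cyclePower p n).CliqueFree (p + 2) := by
  intro T hT
  obtain ⟨v₀, hv₀⟩ : T.Nonempty := by rw [← card_pos, hT.card_eq]; omega
  have hoffset : ∀ v ∈ T, ∃ w : ℤ, w.natAbs ≤ p ∧ v - v₀ = w := by
    intro v hv
    by_cases h : v = v₀
    · exact ⟨0, by simp, by simp [h]⟩
    · exact (cyclePower_adj_iff.1 (hT.isClique hv hv₀ h)).2
  choose! s hs_le hs using hoffset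
  have hinj : Set.InjOn (fun v => (s v : ZMod (p + 1))) T := by
    intro u hu v hv huv
    by_contra hne
    obtain ⟨w, hw, hw_eq⟩ := (cyclePower_adj_iff.1 (hT.isClique hu hv hne)).2
    obtain ⟨c, hc⟩ : ((p + 1 : ℕ) : ℤ) ∣ s u - s v :=
      (ZMod.intCast_eq_intCast_iff_dvd_sub _ _ _).1 huv.symm
    have hdvd : (n : ℤ) ∣ s u - s v - w := by
      rw [← ZMod.intCast_zmod_eq_zero_iff_dvd]
      push_cast
      rw [← hs u hu, ← hs v hv, ← hw_eq]
      ring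
    have hsuv : s u ≠ s v := fun h => hne (by simpa [h, ← hs v hv] using hs u hu)
    have hsu := hs_le u hu
    have hsv := hs_le v hv
    have hdiff : s u - s v ≤ 2 * p ∧ -(2 * p) ≤ s u - s v := by omega
    push_cast at hc
    have hc₁ : -1 ≤ c := by nlinarith
    have hc₂ : c ≤ 1 := by nlinarith
    interval_cases c
    all_goals
      have := Int.eq_zero_of_dvd_of_natAbs_lt_natAbs hdvd (by omega)
      omega
  have := card_le_card_of_injOn _ (fun v _ => mem_coe.2 (mem_univ _)) hinj
  rw [card_univ, ZMod.card, hT.card_eq] at this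
  omega

theorem cyclePower_isNClique_arc {p n : ℕ} (hp : p < n) (a : ZMod n) :
    (cyclePower p n).IsNClique (p + 1) ((range (p + 1)).image fun d : ℕ => a + d) := by
  have hinj : Set.InjOn (fun d : ℕ => a + d) (range (p + 1)) := by
    intro d₁ hd₁ d₂ hd₂ h
    simp only [coe_range, Set.mem_Iio] at hd₁ hd₂
    have := (ZMod.natCast_eq_natCast_iff' d₁ d₂ n).1 (add_left_cancel h)
    rwa [Nat.mod_eq_of_lt (by omega), Nat.mod_eq_of_lt (by omega)] at this
  refine ⟨?_, by rw [card_image_of_injOn hinj, card_range]⟩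
  simp only [coe_image, coe_range]
  rintro _ ⟨d₁, hd₁ : d₁ < p + 1, rfl⟩ _ ⟨d₂, hd₂ : d₂ < p + 1, rfl⟩ hne
  exact cyclePower_adj_iff.2 ⟨hne, (d₁ : ℤ) - d₂, by omega, by push_cast; ring⟩

theorem cyclePower_exists_isNClique_forall_notMem {p n : ℕ} (hp : p < n)
    (S : Finset (ZMod n)) (hS : #S * (p + 1) < n) :
    ∃ T : Finset (ZMod n), (cyclePower p n).IsNClique (p + 1) T ∧ ∀ v ∈ T, v ∉ S := by
  have : NeZero n := ⟨by omega⟩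
  obtain ⟨a, ha⟩ := ZMod.exists_forall_add_natCast_notMem S hS
  refine ⟨_, cyclePower_isNClique_arc hp a, ?_⟩
  simp only [mem_image, mem_range]
  rintro _ ⟨d, hd, rfl⟩
  exact ha d hd

end SimpleGraph

theorem betaWitness_card_of_cliqueFree {V : Type*} [Fintype V] {G : SimpleGraph V} {i k r : ℕ}
    (hk : Fintype.card V ≤ k) (hG : G.CliqueFree r)
    (havoid : ∀ S : Finset V, #S ≤ i →
      ∃ T : Finset V, G.IsNClique (r - 1) T ∧ ∀ v ∈ T, v ∉ S) :
    BetaWitness i k r (Fintype.card V) := by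
  classical
  let e := Fintype.equivFin V
  let P : Fin (Fintype.card V) → Fin k := Fin.castLE hk
  refine ⟨G.map e.toEmbedding, P, fun u v huv hP => huv.ne (Fin.castLE_injective hk hP),
    hG.comap (Iso.map e G).symm.isContained, fun S hS => ?_⟩
  obtain ⟨T, hT, hTS⟩ := havoid ({v | P (e v) ∈ S} : Finset V) <| hS ▸
    card_le_card_of_injOn (P ∘ e) (fun v hv => by simpa using hv)
      ((Fin.castLE_injective hk).comp e.injective).injOn
  refine ⟨T.map e.toEmbedding, hT.map, ?_⟩
  simp only [mem_map, Equiv.coe_toEmbedding]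
  rintro _ ⟨v, hv, rfl⟩ hvS
  exact hTS v hv (by simpa [P] using hvS)

theorem stmt_5 (k r i : ℕ) (hr : 2 ≤ r) (hi : 2 ≤ i) (hk : i * (r - 1) + 1 ≤ k) :
    beta i k r ≤ i * (r - 1) + 1 ∧
    ∀ G : SimpleGraph (ZMod (i * (r - 1) + 1)),
      G = SimpleGraph.fromRel
        (fun u v => ∃ d : ℕ, 1 ≤ d ∧ d ≤ r - 2 ∧ u - v = (d : ZMod (i * (r - 1) + 1))) →
      G.CliqueFree r ∧
      ∀ S : Finset (ZMod (i * (r - 1) + 1)), S.card = i →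
        ∃ T : Finset (ZMod (i * (r - 1) + 1)),
          G.IsNClique (r - 1) T ∧ ∀ v ∈ T, v ∉ S := by
  obtain ⟨p, rfl⟩ : ∃ p, r = p + 2 := ⟨r - 2, by omega⟩
  simp only [Nat.add_sub_cancel] at hk ⊢
  have hn : 2 * (p + 1) ≤ i * (p + 1) := Nat.mul_le_mul_right _ hi
  have hfree : (cyclePower p (i * (p + 1) + 1)).CliqueFree (p + 2) :=
    cyclePower_cliqueFree (by omega)
  have havoid (S : Finset (ZMod (i * (p + 1) + 1))) (hS : #S ≤ i) :
      ∃ T, (cyclePower p _).IsNClique (p + 1) T ∧ ∀ v ∈ T, v ∉ S :=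
    cyclePower_exists_isNClique_forall_notMem (by omega) S
      (Nat.lt_succ_of_le (Nat.mul_le_mul_right _ hS))
  refine ⟨?_, ?_⟩
  · have := betaWitness_card_of_cliqueFree (k := k) (by rwa [ZMod.card]) hfree havoid
    rw [ZMod.card] at this
    exact Nat.sInf_le this
  · rintro G rfl
    exact ⟨hfree, fun S hS => havoid S hS.le⟩
end

section
/- For all integers r ≥ 2 and k ≥ 2r - 1, β_2(k, r) = 2r - 1. -/
/-!
Upper bound: in the complement of the cycle `C_{2m+1}`, where `m = r - 1`, cliques are independent
sets of the cycle, so they have at most `m` vertices, and any two vertices are missed by one of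
size `m`: the odd offsets from a vertex `c` from which both lie at even offsets. Putting every
vertex in its own part gives a witness on `2r - 1` vertices.

Lower bound: let `G` be `K_{m+1}`-free with any two vertices missed by an `m`-clique, and fix an
`m`-clique `C`. For nonempty `A ⊆ C` let `N(A)` be the vertices outside `C` non-adjacent to some
vertex of `A`. Take an `m`-clique `D` missing some `a ∈ A` and a non-neighbour `y ∉ C` of `a`.
Since `A ∪ (D \ (A ∪ N(A)))` is a clique, `|A| ≤ |A ∩ D| + |N(A) ∩ D|`; since `N(A ∩ D)` misses
`D`, induction on `A ∩ D ⊂ A` gives `|A ∩ D| + 1 ≤ |N(A) \ D|`. Hence `|N(A)| ≥ |A| + 1`, and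
`A = C` gives `n - m ≥ m + 1`.
-/

open SimpleGraph

open Finset

lemma Finset.exists_subset_pair_of_card_le_two {α : Type*} [DecidableEq α] [Nonempty α]
    {s : Finset α} (hs : #s ≤ 2) : ∃ a b, s ⊆ {a, b} := by
  rcases s.eq_empty_or_nonempty with rfl | ⟨a, ha⟩
  · exact ⟨Classical.arbitrary α, Classical.arbitrary α, empty_subset _⟩
  · obtain ⟨b, hb⟩ := card_le_one_iff_subset_singleton.mp
      (by rw [card_erase_of_mem ha]; omega : #(s.erase a) ≤ 1)
    exact ⟨a, b, fun x hx => by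
      by_cases hxa : x = a
      · simp [hxa]
      · simpa using Or.inr (mem_singleton.mp (hb (mem_erase.mpr ⟨hxa, hx⟩)))⟩

open Fin.NatCast in
lemma Fin.natCast_inj_of_lt {n p q : ℕ} [NeZero n] (hp : p < n) (hq : q < n) :
    (p : Fin n) = q ↔ p = q := by
  rw [Fin.ext_iff, Fin.val_cast_of_lt hp, Fin.val_cast_of_lt hq]

namespace SimpleGraph

def CliquesAvoid {V : Type*} (G : SimpleGraph V) (i m : ℕ) : Prop :=
  ∀ s : Finset V, #s ≤ i → ∃ t, G.IsNClique m t ∧ Disjoint s t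

lemma IsClique.card_le_of_cliqueFree {V : Type*} {G : SimpleGraph V} {m : ℕ} {s : Finset V}
    (hG : G.CliqueFree (m + 1)) (hs : G.IsClique (s : Set V)) : #s ≤ m := by
  by_contra! h
  obtain ⟨t, hts, ht⟩ := exists_subset_card_eq h
  exact hG t ⟨hs.subset hts, ht⟩

section NonNeighbors

variable {V : Type*} [Fintype V] [DecidableEq V] (G : SimpleGraph V) [DecidableRel G.Adj]

def outsideNonNeighbors (C A : Finset V) : Finset V := {w ∈ Cᶜ | ∃ a ∈ A, ¬G.Adj a w}

variable {G} {m : ℕ} {a : V} {A B C D : Finset V}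

lemma outsideNonNeighbors_mono (h : A ⊆ B) :
    G.outsideNonNeighbors C A ⊆ G.outsideNonNeighbors C B :=
  fun _ hw => by
    obtain ⟨hwC, a, ha, hna⟩ := mem_filter.mp hw
    exact mem_filter.mpr ⟨hwC, a, h ha, hna⟩

lemma disjoint_outsideNonNeighbors (hD : G.IsClique D) (hAC : A ⊆ C) (hAD : A ⊆ D) :
    Disjoint (G.outsideNonNeighbors C A) D := by
  refine Finset.disjoint_left.mpr fun w hw hwD => ?_
  obtain ⟨hwC, a, ha, hna⟩ := mem_filter.mp hw
  exact hna (hD (hAD ha) hwD fun h => mem_compl.mp hwC (h ▸ hAC ha))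

lemma card_le_card_inter_add_card_outsideNonNeighbors_inter (hG : G.CliqueFree (m + 1))
    (hC : G.IsClique C) (hD : G.IsNClique m D) (hAC : A ⊆ C) :
    #A ≤ #(A ∩ D) + #(G.outsideNonNeighbors C A ∩ D) := by
  set N := G.outsideNonNeighbors C A
  have hE : G.IsClique (A ∪ (D \ (A ∪ N)) : Finset V) := by
    have cross : ∀ u ∈ A, ∀ v ∈ D \ (A ∪ N), u ≠ v → G.Adj u v := by
      intro u hu v hv huv
      simp only [mem_sdiff, mem_union, not_or] at hv
      by_cases hvC : v ∈ C
      · exact hC (hAC hu) hvC huv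
      · by_contra hna
        exact hv.2.2 (mem_filter.mpr ⟨mem_compl.mpr hvC, u, hu, hna⟩)
    intro u hu v hv huv
    simp only [coe_union, Set.mem_union, mem_coe] at hu hv
    rcases hu with hu | hu <;> rcases hv with hv | hv
    · exact hC (hAC hu) (hAC hv) huv
    · exact cross u hu v hv huv
    · exact (cross v hv u hu huv.symm).symm
    · exact hD.isClique (mem_sdiff.mp hu).1 (mem_sdiff.mp hv).1 huv
  have hEcard := hE.card_le_of_cliqueFree hG
  rw [card_union_of_disjoint (disjoint_sdiff.mono_left subset_union_left)] at hEcard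
  have hDcover : D ⊆ (D \ (A ∪ N)) ∪ (A ∩ D) ∪ (N ∩ D) := by
    intro v hv
    by_cases hA : v ∈ A <;> by_cases hN : v ∈ N <;> simp [hv, hA, hN]
  have hDcard := card_le_card hDcover
  have h₁ := card_union_le (D \ (A ∪ N) ∪ A ∩ D) (N ∩ D)
  have h₂ := card_union_le (D \ (A ∪ N)) (A ∩ D)
  rw [hD.card_eq] at hDcard
  omega

lemma exists_mem_outsideNonNeighbors (hG : G.CliqueFree (m + 1)) (hC : G.IsClique C)
    (hD : G.IsNClique m D) (haC : a ∈ C) (haD : a ∉ D) :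
    ∃ y ∈ D, y ∈ G.outsideNonNeighbors C {a} := by
  by_contra! h
  refine hG (insert a D) (hD.insert fun d hd => ?_)
  by_cases hdC : d ∈ C
  · exact hC haC hdC fun had => haD (had ▸ hd)
  · by_contra hna
    exact h d hd (mem_filter.mpr ⟨mem_compl.mpr hdC, a, mem_singleton_self a, hna⟩)

/-- A strengthening of Hall's condition for the non-adjacency relation between `C` and `Cᶜ`. -/
lemma card_add_one_le_card_outsideNonNeighbors (hG : G.CliqueFree (m + 1)) (hC : G.IsClique C)
    (hav : G.CliquesAvoid 2 m) (hAC : A ⊆ C) (hA : A.Nonempty) :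
    #A + 1 ≤ #(G.outsideNonNeighbors C A) := by
  induction A using Finset.strongInduction with
  | H A ih =>
  obtain ⟨a, ha⟩ := hA
  obtain ⟨D₀, hD₀, haD₀⟩ := hav {a} (by simp)
  obtain ⟨y, -, hy⟩ := exists_mem_outsideNonNeighbors hG hC hD₀ (hAC ha)
    (disjoint_singleton_left.mp haD₀)
  obtain ⟨D, hD, hayD⟩ := hav {a, y} card_le_two
  have haD : a ∉ D := Finset.disjoint_left.mp hayD (mem_insert_self a {y})
  have hyD : y ∉ D := Finset.disjoint_left.mp hayD (mem_insert_of_mem (mem_singleton_self y))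
  set N := G.outsideNonNeighbors C A
  have hyN : y ∈ N := outsideNonNeighbors_mono (singleton_subset_iff.mpr ha) hy
  have hinter : #(A ∩ D) + 1 ≤ #(N \ D) := by
    rcases (A ∩ D).eq_empty_or_nonempty with hAD | hAD
    · rw [hAD, card_empty]
      exact card_pos.mpr ⟨y, mem_sdiff.mpr ⟨hyN, hyD⟩⟩
    · have hsub : A ∩ D ⊂ A :=
        ssubset_of_subset_of_ne inter_subset_left fun h => haD (mem_of_mem_inter_right (h ▸ ha))
      calc #(A ∩ D) + 1 ≤ #(G.outsideNonNeighbors C (A ∩ D)) :=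
            ih _ hsub (inter_subset_left.trans hAC) hAD
        _ ≤ #(N \ D) := card_le_card <| subset_sdiff.mpr
            ⟨outsideNonNeighbors_mono inter_subset_left,
              disjoint_outsideNonNeighbors hD.isClique (inter_subset_left.trans hAC)
                inter_subset_right⟩
  have hcross : #A ≤ #(A ∩ D) + #(N ∩ D) :=
    card_le_card_inter_add_card_outsideNonNeighbors_inter hG hC hD hAC
  have hsplit := card_inter_add_card_sdiff N D
  omega

theorem two_mul_lt_card_of_cliquesAvoid (hm : 0 < m) (hG : G.CliqueFree (m + 1))
    (hav : G.CliquesAvoid 2 m) : 2 * m < Fintype.card V := by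
  obtain ⟨C, hC, -⟩ := hav ∅ (by simp)
  have hsurplus := card_add_one_le_card_outsideNonNeighbors hG hC.isClique hav subset_rfl
    (card_pos.mp (hC.card_eq ▸ hm))
  have houtside : #(G.outsideNonNeighbors C C) ≤ #Cᶜ := card_le_card (filter_subset _ _)
  rw [card_compl, hC.card_eq] at houtside
  rw [hC.card_eq] at hsurplus
  omega

end NonNeighbors

section Cycle

lemma cycleGraph_adj_iff {n : ℕ} [NeZero n] (hn : 1 < n) {u v : Fin n} :
    (cycleGraph n).Adj u v ↔ u = v + 1 ∨ v = u + 1 := by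
  have h1 : ((1 : Fin n) : ℕ) = 1 := by rw [Fin.val_one', Nat.mod_eq_of_lt hn]
  rw [cycleGraph_adj', ← h1, ← Fin.ext_iff, ← Fin.ext_iff, sub_eq_iff_eq_add', sub_eq_iff_eq_add',
    add_comm v, add_comm u]

variable {m : ℕ}

open Fin.NatCast

lemma cliqueFree_compl_cycleGraph (hm : 0 < m) : (cycleGraph (2 * m + 1))ᶜ.CliqueFree (m + 1) := by
  intro s hs
  rw [isNClique_compl] at hs
  have hdisj : Disjoint s (s.image (· + 1)) := Finset.disjoint_left.mpr fun v hv hv' => by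
    obtain ⟨w, hw, rfl⟩ := mem_image.mp hv'
    have hadj : (cycleGraph _).Adj w (w + 1) := (cycleGraph_adj_iff (by omega)).mpr (Or.inr rfl)
    exact hs.isIndepSet hw hv hadj.ne hadj
  have hcard := card_le_univ (s ∪ s.image (· + 1))
  rw [card_union_of_disjoint hdisj, card_image_of_injective _ (add_left_injective 1), hs.card_eq,
    Fintype.card_fin] at hcard
  omega

def oddOffsets (m : ℕ) (a : Fin (2 * m + 1)) : Finset (Fin (2 * m + 1)) :=
  (range m).image fun i => a + ((2 * i + 1 : ℕ) : Fin (2 * m + 1))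

lemma isNIndepSet_oddOffsets (a : Fin (2 * m + 1)) :
    (cycleGraph (2 * m + 1)).IsNIndepSet m (oddOffsets m a) := by
  have hinj : Set.InjOn (fun i : ℕ => a + ((2 * i + 1 : ℕ) : Fin (2 * m + 1))) (range m) := by
    intro i hi j hj h
    simp only [coe_range, Set.mem_Iio] at hi hj
    have := (Fin.natCast_inj_of_lt (by omega) (by omega)).mp (add_left_cancel h)
    omega
  refine ⟨?_, by rw [oddOffsets, card_image_of_injOn hinj, card_range]⟩
  intro u hu v hv _ hadj
  simp only [oddOffsets, coe_image, coe_range, Set.mem_image, Set.mem_Iio] at hu hv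
  obtain ⟨i, hi, rfl⟩ := hu
  obtain ⟨j, hj, rfl⟩ := hv
  have key : ∀ i j, i < m → j < m →
      a + ((2 * i + 1 : ℕ) : Fin (2 * m + 1)) ≠ a + ((2 * j + 1 : ℕ) : Fin (2 * m + 1)) + 1 := by
    intro i j hi hj h
    rw [add_assoc, ← Nat.cast_add_one] at h
    have := (Fin.natCast_inj_of_lt (by omega) (by omega)).mp (add_left_cancel h)
    omega
  rcases (cycleGraph_adj_iff (by omega)).mp hadj with h | h
  · exact key i j hi hj h
  · exact key j i hj hi h

lemma add_even_notMem_oddOffsets (a : Fin (2 * m + 1)) {i : ℕ} (hi : i ≤ m) :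
    a + ((2 * i : ℕ) : Fin (2 * m + 1)) ∉ oddOffsets m a := by
  simp only [oddOffsets, mem_image, mem_range, not_exists, not_and]
  intro j hj h
  have := (Fin.natCast_inj_of_lt (by omega) (by omega)).mp (add_left_cancel h)
  omega

lemma exists_eq_add_even (x y : Fin (2 * m + 1)) :
    ∃ c, ∃ i ≤ m, ∃ j ≤ m,
      x = c + ((2 * i : ℕ) : Fin (2 * m + 1)) ∧ y = c + ((2 * j : ℕ) : Fin (2 * m + 1)) := by
  have hlt := (y - x).isLt
  have hxy : y = x + (((y - x : Fin (2 * m + 1)) : ℕ) : Fin (2 * m + 1)) := by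
    rw [Fin.cast_val_eq_self, add_sub_cancel]
  obtain ⟨j, hj | hj⟩ := Nat.even_or_odd' (y - x : Fin (2 * m + 1))
  · exact ⟨x, 0, Nat.zero_le _, j, by omega, by simp, hj ▸ hxy⟩
  · refine ⟨y, m - j, Nat.sub_le m j, 0, Nat.zero_le _, ?_, by simp⟩
    rw [hxy, hj, add_assoc, ← Nat.cast_add, show 2 * j + 1 + 2 * (m - j) = 2 * m + 1 by omega,
      Fin.natCast_self, add_zero]

lemma cliquesAvoid_compl_cycleGraph : (cycleGraph (2 * m + 1))ᶜ.CliquesAvoid 2 m := by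
  intro s hs
  obtain ⟨x, y, hsxy⟩ := exists_subset_pair_of_card_le_two hs
  obtain ⟨c, i, hi, j, hj, rfl, rfl⟩ := exists_eq_add_even x y
  refine ⟨oddOffsets m c, (isNClique_compl (G := cycleGraph _)).mpr (isNIndepSet_oddOffsets c), ?_⟩
  refine disjoint_of_subset_left hsxy (Finset.disjoint_left.mpr fun v hv => ?_)
  rcases mem_insert.mp hv with rfl | hv
  · exact add_even_notMem_oddOffsets c hi
  · rw [mem_singleton.mp hv]; exact add_even_notMem_oddOffsets c hj

end Cycle

end SimpleGraph

lemma betaWitness_of_cliquesAvoid {i k r n : ℕ} {G : SimpleGraph (Fin n)} (hG : G.CliqueFree r)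
    (hav : G.CliquesAvoid i (r - 1)) (hnk : n ≤ k) : BetaWitness i k r n := by
  refine ⟨G, Fin.castLE hnk, fun u v huv h => huv.ne (Fin.castLE_injective hnk h), hG,
    fun S hS => ?_⟩
  obtain ⟨T, hT, hST⟩ := hav (S.preimage (Fin.castLE hnk) (Fin.castLE_injective hnk).injOn) <|
    hS ▸ card_le_card_of_injOn _ (fun v hv => mem_preimage.mp hv)
      (Fin.castLE_injective hnk).injOn
  exact ⟨T, hT, fun v hvT hvS => Finset.disjoint_left.mp hST (mem_preimage.mpr hvS) hvT⟩

lemma BetaWitness.exists_cliquesAvoid {i k r n : ℕ} (h : BetaWitness i k r n) (hik : i ≤ k) :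
    ∃ G : SimpleGraph (Fin n), G.CliqueFree r ∧ G.CliquesAvoid i (r - 1) := by
  classical
  obtain ⟨G, P, -, hG, hcl⟩ := h
  refine ⟨G, hG, fun s hs => ?_⟩
  obtain ⟨S, hsS, hS⟩ := exists_superset_card_eq (s := s.image P) (card_image_le.trans hs)
    (by simpa using hik)
  obtain ⟨T, hT, hTS⟩ := hcl S hS
  exact ⟨T, hT, Finset.disjoint_left.mpr fun v hvs hvT => hTS v hvT (hsS (mem_image_of_mem P hvs))⟩

theorem stmt_8 (k r : ℕ) (hr : 2 ≤ r) (hk : 2 * r - 1 ≤ k) :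
    beta 2 k r = 2 * r - 1 := by
  obtain ⟨m, rfl⟩ : ∃ m, r = m + 1 := ⟨r - 1, by omega⟩
  have hm : 0 < m := by omega
  rw [show 2 * (m + 1) - 1 = 2 * m + 1 by omega] at hk ⊢
  have hwit : BetaWitness 2 k (m + 1) (2 * m + 1) :=
    betaWitness_of_cliquesAvoid (cliqueFree_compl_cycleGraph hm)
      (by simpa using cliquesAvoid_compl_cycleGraph) hk
  refine le_antisymm (Nat.sInf_le hwit) ?_
  have hbeta : BetaWitness 2 k (m + 1) (beta 2 k (m + 1)) :=
    Nat.sInf_mem (s := {n | BetaWitness 2 k (m + 1) n}) ⟨_, hwit⟩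
  obtain ⟨G, hG, hav⟩ := hbeta.exists_cliquesAvoid (by omega)
  classical
  simpa using two_mul_lt_card_of_cliquesAvoid hm hG (by simpa using hav)
end

section
/- For integers k ≥ r ≥ 2 and 2 ≤ i ≤ k - r + 1, β_i(k, r) ≥ β_{i-1}(k-1, r) + 1. -/
open SimpleGraph

/-!
Let `G` be a witness for `β_i(k, r)` with part map `P`, and let `p` be the part of some vertex
(there is one, as `G` contains a `K_{r-1}` with `r ≥ 2`). Delete part `p`. For any `i - 1` of the
remaining `k - 1` parts, those together with `p` are `i` parts of `G`, so some `K_{r-1}` of `G`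
avoids all of them; in particular it avoids `p` and survives the deletion. Hence what is left is a
witness for `β_{i-1}(k - 1, r)` with at least one vertex fewer. That `β_i(k, r)` is attained at all
comes from the tensor product `K_k × K_{r-1}`, partitioned by the first coordinate.
-/

open Finset

variable {V W ι κ α : Type*}

/-- `BetaWitness`, for arbitrary vertex and part types. -/
structure IsBetaGraph (G : SimpleGraph V) (P : V → ι) (i r : ℕ) : Prop where
  adj_ne : ∀ u v, G.Adj u v → P u ≠ P v
  cliqueFree : G.CliqueFree r
  exists_clique : ∀ S : Finset ι, #S = i →
    ∃ T : Finset V, G.IsNClique (r - 1) T ∧ ∀ v ∈ T, P v ∉ S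

namespace IsBetaGraph

variable {G : SimpleGraph V} {P : V → ι} {i r : ℕ}

theorem map_equiv (h : IsBetaGraph G P i r) (e : V ≃ W) (f : ι ≃ κ) :
    IsBetaGraph (G.map e.toEmbedding) (f ∘ P ∘ e.symm) i r where
  adj_ne u v huv := by
    obtain ⟨-, u, v, huv, rfl, rfl⟩ := huv
    simpa using h.adj_ne u v huv
  cliqueFree := h.cliqueFree.comap (Iso.map e G).symm.toEmbedding.isContained
  exists_clique S hS := by
    obtain ⟨T, hT, hTS⟩ := h.exists_clique (S.map f.symm.toEmbedding) (by simpa using hS)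
    refine ⟨T.map e.toEmbedding, hT.map, ?_⟩
    simp only [mem_map_equiv, Function.comp_apply]
    intro v hv hvS
    exact hTS _ hv (by simpa using hvS)

theorem betaWitness [Fintype V] [Fintype ι] (h : IsBetaGraph G P i r) :
    BetaWitness i (Fintype.card ι) r (Fintype.card V) :=
  let hF := h.map_equiv (Fintype.equivFin V) (Fintype.equivFin ι)
  ⟨_, _, hF.adj_ne, hF.cliqueFree, hF.exists_clique⟩

theorem beta_le [Fintype V] [Fintype ι] (h : IsBetaGraph G P i r) :
    beta i (Fintype.card ι) r ≤ Fintype.card V :=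
  Nat.sInf_le h.betaWitness

theorem deletePart (h : IsBetaGraph G P i r) (hi : 1 ≤ i) (p : ι) :
    IsBetaGraph (G.induce {v | P v ≠ p}) (fun v ↦ (⟨P v, v.2⟩ : {q // q ≠ p})) (i - 1) r where
  adj_ne u v huv := by simpa using h.adj_ne _ _ huv
  cliqueFree := h.cliqueFree.comap (Embedding.induce _).isContained
  exists_clique S hS := by
    classical
    have hpS : p ∉ S.map (Function.Embedding.subtype _) := by simp
    obtain ⟨T, hT, hTS⟩ := h.exists_clique (insert p (S.map (Function.Embedding.subtype _)))
      (by rw [card_insert_of_notMem hpS, card_map, hS]; omega)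
    have hTp : ∀ v ∈ T, P v ≠ p := fun v hv hvp ↦
      hTS v hv (by rw [hvp]; exact mem_insert_self _ _)
    refine ⟨T.subtype _, ⟨?_, ?_⟩, ?_⟩
    · intro u hu v hv huv
      exact hT.isClique (mem_subtype.1 hu) (mem_subtype.1 hv) (Subtype.val_injective.ne huv)
    · rw [card_subtype, filter_true_of_mem (p := (· ∈ {v | P v ≠ p})) hTp, hT.card_eq]
    · intro v hv hvS
      exact hTS v (mem_subtype.1 hv) (mem_insert_of_mem (mem_map_of_mem _ hvS))

theorem nonempty [Fintype ι] (h : IsBetaGraph G P i r) (hi : i ≤ Fintype.card ι) (hr : 2 ≤ r) :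
    Nonempty V := by
  obtain ⟨S, -, hS⟩ := exists_subset_card_eq (s := (univ : Finset ι)) (by simpa using hi)
  obtain ⟨T, hT, -⟩ := h.exists_clique S hS
  obtain ⟨v, -⟩ := card_pos.1 (by rw [hT.card_eq]; omega)
  exact ⟨v⟩

theorem beta_pred_lt [Fintype V] [Fintype ι] (h : IsBetaGraph G P i r) (hi : 1 ≤ i) (v : V) :
    beta (i - 1) (Fintype.card ι - 1) r < Fintype.card V := by
  classical
  calc beta (i - 1) (Fintype.card ι - 1) r
      = beta (i - 1) (Fintype.card {q // q ≠ P v}) r := by simp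
    _ ≤ Fintype.card {u // u ∈ {u | P u ≠ P v}} := (h.deletePart hi (P v)).beta_le
    _ < Fintype.card V := Fintype.card_subtype_lt (x := v) (by simp)

end IsBetaGraph

def tensorCompleteGraph (ι α : Type*) : SimpleGraph (ι × α) :=
  (⊤ : SimpleGraph ι).comap Prod.fst ⊓ (⊤ : SimpleGraph α).comap Prod.snd

@[simp]
theorem tensorCompleteGraph_adj {x y : ι × α} :
    (tensorCompleteGraph ι α).Adj x y ↔ x.1 ≠ y.1 ∧ x.2 ≠ y.2 := Iff.rfl

theorem isBetaGraph_tensorCompleteGraph [Fintype ι] [Fintype α] {i : ℕ}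
    (h : i + Fintype.card α ≤ Fintype.card ι) :
    IsBetaGraph (tensorCompleteGraph ι α) Prod.fst i (Fintype.card α + 1) where
  adj_ne _ _ huv := huv.1
  cliqueFree :=
    (Coloring.mk (G := tensorCompleteGraph ι α) Prod.snd fun huv ↦ huv.2).colorable.cliqueFree
      (Nat.lt_succ_self _)
  exists_clique S hS := by
    classical
    obtain ⟨f⟩ : Nonempty (α ↪ (Sᶜ : Finset ι)) :=
      Function.Embedding.nonempty_of_card_le (by simp only [Fintype.card_coe, card_compl, hS]; omega)
    refine ⟨univ.map ⟨fun a ↦ ((f a : ι), a), fun a b hab ↦ congrArg Prod.snd hab⟩, ⟨?_, ?_⟩, ?_⟩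
    · simp only [coe_map, coe_univ, Set.image_univ]
      rintro _ ⟨a, rfl⟩ _ ⟨b, rfl⟩ hab
      have hab : a ≠ b := fun h ↦ hab (h ▸ rfl)
      exact ⟨Subtype.val_injective.ne (f.injective.ne hab), hab⟩
    · simp
    · simp only [mem_map, mem_univ, true_and]
      rintro _ ⟨a, rfl⟩
      exact mem_compl.1 (f a).2

theorem exists_betaWitness {i k r : ℕ} (hr : 1 ≤ r) (h : i + (r - 1) ≤ k) :
    ∃ n, BetaWitness i k r n := by
  have hG := (isBetaGraph_tensorCompleteGraph (ι := Fin k) (α := Fin (r - 1))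
    (by simpa using h)).betaWitness
  rw [Fintype.card_fin, Fintype.card_fin, Nat.sub_add_cancel hr] at hG
  exact ⟨_, hG⟩

theorem stmt_9_general (k r i : ℕ) (hr : 2 ≤ r) (hi1 : 2 ≤ i) (hi2 : i ≤ k - r + 1) :
    beta (i - 1) (k - 1) r + 1 ≤ beta i k r := by
  obtain ⟨G, P, hadj, hfree, hcl⟩ : BetaWitness i k r (beta i k r) :=
    Nat.sInf_mem (exists_betaWitness (by omega) (by omega))
  have hP : IsBetaGraph G P i r := ⟨hadj, hfree, hcl⟩
  obtain ⟨v⟩ := hP.nonempty (by rw [Fintype.card_fin]; omega) hr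
  simpa using hP.beta_pred_lt (by omega) v

theorem stmt_9 (k r i : ℕ) (hr : 2 ≤ r) (hkr : r ≤ k) (hi1 : 2 ≤ i) (hi2 : i ≤ k - r + 1) :
    beta (i - 1) (k - 1) r + 1 ≤ beta i k r :=
  stmt_9_general k r i hr hi1 hi2
end

section
/- Let k ≥ r ≥ 3, and let G be a k-partite K_r-free graph containing an independent set X consisting of exactly one vertex from each part, such that adding any edge between two distinct vertices of X creates a copy of K_r. Then for each x ∈ X, the subgraph of G induced on the neighborhood N(x) is a K_{r-1}-free (k-1)-partite graph with the property that the subgraph induced by any k-2 of its parts contains a clique of size r-2. In particular, every x ∈ X has degree at least 2r - 4. -/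
/-!
In a `K_r`-free graph the neighbourhood `N(x)` of any vertex is `K_{r-1}`-free. If adding the
non-edge `x x_j` creates a `K_r`, that `K_r` contains both `x` and `x_j`, so the remaining `r - 2`
vertices form a clique in `N(x)` which, being adjacent to `x_j`, avoids the part of `x_j`.
These `(r-2)`-cliques `C_j` of `N(x)` have empty common intersection (a vertex of part `j` is not
in `C_j`), so Hajnal's lemma `|⋂ C_j| + |⋃ C_j| ≥ 2 (r - 2)` gives `deg x ≥ 2r - 4`.
-/

open Finset

namespace SimpleGraph

variable {V : Type*} {G : SimpleGraph V}

theorem CliqueFreeOn.card_le_of_isClique {W : Set V} {n : ℕ} {T : Finset V}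
    (h : G.CliqueFreeOn W (n + 1)) (hTW : (T : Set V) ⊆ W) (hT : G.IsClique (T : Set V)) :
    #T ≤ n := by
  by_contra! hn
  obtain ⟨T', hT'T, hcard⟩ := exists_subset_card_eq hn
  exact h ((coe_subset.2 hT'T).trans hTW) ⟨hT.subset (coe_subset.2 hT'T), hcard⟩

theorem CliqueFree.cliqueFreeOn_neighborSet {n : ℕ} (h : G.CliqueFree (n + 1)) (a : V) :
    G.CliqueFreeOn (G.neighborSet a) n := by
  simpa using CliqueFreeOn.of_succ (G := G) (s := Set.univ) h.cliqueFreeOn (Set.mem_univ a)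

theorem CliqueFree.exists_isNClique_of_not_cliqueFree_sup_edge {n : ℕ} {a b : V}
    (h : G.CliqueFree n) (hab : ¬ (G ⊔ edge a b).CliqueFree n) :
    ∃ T : Finset V, G.IsNClique (n - 2) T ∧ ∀ v ∈ T, G.Adj a v ∧ G.Adj b v := by
  classical
  obtain ⟨t, ht⟩ := not_forall_not.1 hab
  have hne : a ≠ b := by
    rintro rfl
    exact hab (by simpa [edge_self_eq_bot] using h)
  have ha := h.mem_of_sup_edge_isNClique ht
  have hb := h.mem_of_sup_edge_isNClique (edge_comm .. ▸ ht)
  have hta := ht.erase_of_sup_edge_of_mem ha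
  have htb := (edge_comm .. ▸ ht).erase_of_sup_edge_of_mem hb
  refine ⟨(t.erase a).erase b, ?_, fun v hv ↦ ?_⟩
  · simpa [Nat.sub_sub] using hta.erase_of_mem (mem_erase.2 ⟨hne.symm, hb⟩)
  · obtain ⟨hvb, hva, hvt⟩ : v ≠ b ∧ v ≠ a ∧ v ∈ t := by simpa using hv
    exact ⟨htb.isClique (mem_erase.2 ⟨hne, ha⟩) (mem_erase.2 ⟨hvb, hvt⟩) (Ne.symm hva),
      hta.isClique (mem_erase.2 ⟨hne.symm, hb⟩) (mem_erase.2 ⟨hva, hvt⟩) (Ne.symm hvb)⟩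

variable [DecidableEq V] {W : Set V} {s : ℕ}

/- `I \ C` together with its common neighbours `X` in `C` is a clique in `W`, and `X` contains
`C ∩ U`; hence `|I \ C| ≤ |C| - |C ∩ U| = |C \ U|`. -/
theorem card_add_card_le_card_inter_add_card_union (hW : G.CliqueFreeOn W (s + 1))
    {C I U : Finset V} (hC : G.IsNClique s C) (hCW : (C : Set V) ⊆ W) (hIW : (I : Set V) ⊆ W)
    (hIU : I ⊆ U) (hadj : ∀ v ∈ I, ∀ w ∈ U, v ≠ w → G.Adj v w) :
    #I + #U ≤ #(I ∩ C) + #(U ∪ C) := by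
  classical
  set X : Finset V := {w ∈ C | ∀ v ∈ I \ C, G.Adj v w}
  have hCUX : C ∩ U ⊆ X := by
    intro w hw
    obtain ⟨hwC, hwU⟩ := mem_inter.1 hw
    refine mem_filter.2 ⟨hwC, fun v hv ↦ hadj v (sdiff_subset hv) w hwU ?_⟩
    rintro rfl
    exact (mem_sdiff.1 hv).2 hwC
  have hAX : #(I \ C) + #X ≤ s := by
    have hdisj : Disjoint (I \ C) X :=
      Finset.disjoint_left.2 fun v hvA hvX ↦ (mem_sdiff.1 hvA).2 (mem_filter.1 hvX).1
    rw [← card_union_of_disjoint hdisj]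
    refine hW.card_le_of_isClique ?_ ?_
    · rw [coe_union, Set.union_subset_iff]
      exact ⟨(coe_subset.2 sdiff_subset).trans hIW,
        (coe_subset.2 (filter_subset _ _)).trans hCW⟩
    · rw [coe_union, isClique_iff, @Set.pairwise_union_of_symm _ _ _ _ G.symm]
      refine ⟨fun v hv w hw hvw ↦ hadj v ?_ w ?_ hvw, fun v hv w hw hvw ↦ ?_,
        fun v hv w hw _ ↦ (mem_filter.1 hw).2 v hv⟩
      · exact sdiff_subset hv
      · exact hIU (sdiff_subset hw)
      · exact hC.isClique (mem_filter.1 hv).1 (mem_filter.1 hw).1 hvw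
  rw [union_comm]
  linarith [card_le_card hCUX, card_sdiff_add_card_inter I C, card_sdiff_add_card C U,
    card_inter_add_card_sdiff C U, hC.card_eq]

theorem adj_of_mem_inf'_of_mem_sup' {ι : Type*} {C : ι → Finset V} {Q : Finset ι}
    (hQ : Q.Nonempty) (hC : ∀ j ∈ Q, G.IsClique (C j : Set V)) {v w : V}
    (hv : v ∈ Q.inf' hQ C) (hw : w ∈ Q.sup' hQ C) (hvw : v ≠ w) : G.Adj v w := by
  obtain ⟨j, hj, hwj⟩ := (mem_sup' hQ).1 hw
  exact hC j hj ((mem_inf' hQ).1 hv j hj) hwj hvw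

/-- Hajnal's lemma. -/
theorem two_mul_le_card_inf'_add_card_sup' (hW : G.CliqueFreeOn W (s + 1)) {ι : Type*}
    {C : ι → Finset V} {Q : Finset ι} (hQ : Q.Nonempty) (hC : ∀ j ∈ Q, G.IsNClique s (C j))
    (hCW : ∀ j ∈ Q, (C j : Set V) ⊆ W) :
    2 * s ≤ #(Q.inf' hQ C) + #(Q.sup' hQ C) := by
  induction hQ using Finset.Nonempty.cons_induction with
  | singleton j => simp [(hC j (mem_singleton_self j)).card_eq, two_mul]
  | cons j Q hj hQ ih =>
    simp only [mem_cons, forall_eq_or_imp] at hC hCW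
    rw [inf'_cons hQ, sup'_cons hQ, inf_eq_inter, sup_eq_union, inter_comm, union_comm]
    obtain ⟨q, hq⟩ := hQ
    exact (ih hC.2 hCW.2).trans <| card_add_card_le_card_inter_add_card_union hW hC.1 hCW.1
      ((coe_subset.2 (inf'_le C hq)).trans (hCW.2 q hq)) ((inf'_le C hq).trans (le_sup' C hq))
      fun v hv w hw ↦ adj_of_mem_inf'_of_mem_sup' _ (fun q hq ↦ (hC.2 q hq).isClique) hv hw

end SimpleGraph

open SimpleGraph

theorem stmt_11_general {V : Type} [Fintype V] (k r : ℕ) (hr : 3 ≤ r) (hkr : r ≤ k)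
    (G : SimpleGraph V) (P : V → Fin k) (x : Fin k → V)
    (hpart : ∀ u v, G.Adj u v → P u ≠ P v)
    (hfree : G.CliqueFree r)
    (hx : ∀ i, P (x i) = i)
    (hsat : ∀ i j : Fin k, i ≠ j →
      ¬ (G ⊔ SimpleGraph.fromEdgeSet {s(x i, x j)}).CliqueFree r) :
    ∀ i : Fin k,
      -- G[N(x i)] is K_{r-1}-free
      (∀ T : Finset V, (∀ v ∈ T, G.Adj (x i) v) → ¬ G.IsNClique (r - 1) T) ∧
      -- deleting any one of the k-1 parts of G[N(x i)] leaves a clique of size r-2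
      (∀ j : Fin k, j ≠ i → ∃ T : Finset V, G.IsNClique (r - 2) T ∧
        (∀ v ∈ T, G.Adj (x i) v) ∧ ∀ v ∈ T, P v ≠ j) ∧
      -- in particular every x i has degree at least 2r - 4
      2 * r - 4 ≤ (G.neighborSet (x i)).ncard := by
  classical
  obtain ⟨s, rfl⟩ : ∃ s, r = s + 2 := ⟨r - 2, by omega⟩
  intro i
  have hN : G.CliqueFreeOn (G.neighborSet (x i)) (s + 1) := hfree.cliqueFreeOn_neighborSet _
  have hcommon (j : Fin k) (hj : j ≠ i) :
      ∃ T : Finset V, G.IsNClique s T ∧ ∀ v ∈ T, G.Adj (x i) v ∧ G.Adj (x j) v :=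
    hfree.exists_isNClique_of_not_cliqueFree_sup_edge (hsat i j hj.symm)
  choose! C hC hCadj using hcommon
  have hCpart (j : Fin k) (hj : j ≠ i) (v : V) (hv : v ∈ C j) : P v ≠ j :=
    hx j ▸ (hpart _ _ (hCadj j hj v hv).2).symm
  refine ⟨fun T hT hTc ↦ hN (fun v hv ↦ hT v hv) hTc,
    fun j hj ↦ ⟨C j, hC j hj, fun v hv ↦ (hCadj j hj v hv).1, hCpart j hj⟩, ?_⟩
  have hQ : (univ.erase i).Nonempty := card_pos.1 (by simp; omega)
  have hinf : (univ.erase i).inf' hQ C = ∅ := by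
    refine eq_empty_of_forall_notMem fun v hv ↦ ?_
    have ⟨j, hj⟩ := hQ
    have hPv : P v ≠ i := fun h ↦ hpart _ _ ((hCadj j (ne_of_mem_erase hj) v
      ((mem_inf' hQ).1 hv j hj)).1) (by rw [hx, h])
    exact hCpart (P v) hPv v ((mem_inf' hQ).1 hv _ (mem_erase.2 ⟨hPv, mem_univ _⟩)) rfl
  have hsup : (↑((univ.erase i).sup' hQ C) : Set V) ⊆ G.neighborSet (x i) := fun v hv ↦ by
    obtain ⟨j, hj, hvj⟩ := (mem_sup' hQ).1 hv
    exact (hCadj j (ne_of_mem_erase hj) v hvj).1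
  have hHajnal := two_mul_le_card_inf'_add_card_sup' hN hQ (fun j hj ↦ hC j (ne_of_mem_erase hj))
    fun j hj v hv ↦ (hCadj j (ne_of_mem_erase hj) v hv).1
  calc 2 * (s + 2) - 4 = 2 * s := by omega
    _ ≤ #((univ.erase i).sup' hQ C) := by simpa [hinf] using hHajnal
    _ ≤ (G.neighborSet (x i)).ncard := by
      rw [← Set.ncard_coe_finset]
      exact Set.ncard_le_ncard hsup

theorem stmt_11 {V : Type} [Fintype V] (k r : ℕ) (hr : 3 ≤ r) (hkr : r ≤ k)
    (G : SimpleGraph V) (P : V → Fin k) (x : Fin k → V)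
    (hpart : ∀ u v, G.Adj u v → P u ≠ P v)
    (hfree : G.CliqueFree r)
    (hx : ∀ i, P (x i) = i)
    (hind : ∀ i j, ¬ G.Adj (x i) (x j))
    (hsat : ∀ i j : Fin k, i ≠ j →
      ¬ (G ⊔ SimpleGraph.fromEdgeSet {s(x i, x j)}).CliqueFree r) :
    ∀ i : Fin k,
      -- G[N(x i)] is K_{r-1}-free
      (∀ T : Finset V, (∀ v ∈ T, G.Adj (x i) v) → ¬ G.IsNClique (r - 1) T) ∧
      -- deleting any one of the k-1 parts of G[N(x i)] leaves a clique of size r-2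
      (∀ j : Fin k, j ≠ i → ∃ T : Finset V, G.IsNClique (r - 2) T ∧
        (∀ v ∈ T, G.Adj (x i) v) ∧ ∀ v ∈ T, P v ≠ j) ∧
      -- in particular every x i has degree at least 2r - 4
      2 * r - 4 ≤ (G.neighborSet (x i)).ncard :=
  stmt_11_general k r hr hkr G P x hpart hfree hx hsat
end

section
/- Let p ∈ {2, 3} divide r - 2, r ≥ 3, and k = 2r - 4 + p. Define a k-partite graph G on vertices {x_1,...,x_k, y_1,...,y_k} with parts {x_i, y_i}: there are no edges among the x_i; y_i y_j is an edge iff i and j are not consecutive modulo k; and x_i y_j is an edge iff i ≢ j (mod k/p). Then G is K_r-free, every pair x_i, x_j (i ≠ j) has a clique of size r-2 in its common neighborhood, and every non-adjacent pair x_i, y_j in different parts has a clique of size r-2 in its common neighborhood. Moreover each x_i has degree exactly 2r-4. -/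
/-!
Everything is read off offsets from a base point. With `q = 2a + 1 = k / p`, the vertices `x_{i+w}`
and `y_{i+o}` are adjacent iff `w ≢ o (mod q)`, and for `o < o' < k` the vertices `y_{i+o},
y_{i+o'}` are adjacent iff `2 ≤ o' - o ≤ k - 2`. A clique contains at most one `x`. Without one, its
`y`-indices contain no two consecutive elements of `ZMod k`, so there are at most `k / 2 < r` of
them. With `x_i`, the offsets of its `y`'s avoid the multiples of `q`, and each of the `p` blocks of
`2a` remaining offsets holds at most `a` pairwise non-consecutive ones, so the clique has at most
`pa + 1 = r - 1` vertices. Conversely, taking `a` residues at mutual distance at least `2` in every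
block (avoiding the one forbidden residue) gives the `(r - 2)`-cliques, and `x_i` misses exactly the
`p` vertices `y_{i + sq}`, so its degree is `k - p = 2r - 4`.
-/

open SimpleGraph

/-- The relation defining the construction: vertices `(false, i)` are the `x_i`,
vertices `(true, i)` are the `y_i`; the parts are `{(false, i), (true, i)}`. -/
def ConstrRel (k p : ℕ) : Bool × ZMod k → Bool × ZMod k → Prop
  | (false, i), (true, j) => i.val % (k / p) ≠ j.val % (k / p)
  | (true, i), (true, j) => ¬((i - j = 1) ∨ (j - i = 1))
  | _, _ => False

open Finset

theorem ZMod.val_add_natCast_mod {k q : ℕ} [NeZero k] (hq : q ∣ k) (i : ZMod k) (w : ℕ) :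
    (i + w).val % q = (i.val + w) % q := by
  rw [ZMod.val_add, ZMod.val_natCast, Nat.mod_mod_of_dvd _ hq, Nat.add_mod,
    Nat.mod_mod_of_dvd _ hq, ← Nat.add_mod]

theorem ZMod.add_natCast_val_sub {k : ℕ} [NeZero k] (i j : ZMod k) :
    i + ((j - i).val : ZMod k) = j := by
  rw [ZMod.natCast_zmod_val, add_sub_cancel]

theorem ZMod.two_mul_card_le_of_add_one_notMem {k : ℕ} [NeZero k] (A : Finset (ZMod k))
    (hA : ∀ a ∈ A, a + 1 ∉ A) : 2 * #A ≤ k := by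
  have hdisj : Disjoint A (A.image (· + 1)) := by
    simp only [Finset.disjoint_left, mem_image, not_exists, not_and]
    rintro _ hb a ha rfl
    exact hA a ha hb
  calc 2 * #A = #(A ∪ A.image (· + 1)) := by
        rw [card_union_of_disjoint hdisj, card_image_of_injective _ (add_left_injective 1)]; ring
    _ ≤ k := (card_le_univ _).trans (ZMod.card k).le

theorem Nat.card_le_of_not_dvd_of_add_one_notMem {p a : ℕ} (W : Finset ℕ)
    (hlt : ∀ w ∈ W, w < p * (2 * a + 1)) (hdvd : ∀ w ∈ W, ¬ (2 * a + 1) ∣ w)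
    (hsucc : ∀ w ∈ W, w + 1 ∉ W) : #W ≤ p * a := by
  set q := 2 * a + 1
  have hres : ∀ w ∈ W, 1 ≤ w % q ∧ w % q ≤ 2 * a := fun w hw =>
    ⟨Nat.pos_of_ne_zero fun h => hdvd w hw (Nat.dvd_of_mod_eq_zero h),
      Nat.le_of_lt_succ (Nat.mod_lt w (by omega))⟩
  -- the residues `2c - 1, 2c` of a block share the slot `c`, and cannot both occur
  let f : ℕ → ℕ × ℕ := fun w => (w / q, (w % q + 1) / 2)
  calc #W ≤ #(range p ×ˢ Icc 1 a) := by
        refine card_le_card_of_injOn f (fun w hw => ?_) (fun w hw w' hw' hww' => ?_)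
        · have := hres w hw
          simp only [f, coe_product, coe_range, coe_Icc, Set.mem_prod, Set.mem_Iio, Set.mem_Icc,
            Nat.div_lt_iff_lt_mul (by omega : 0 < q)]
          exact ⟨hlt w hw, by omega, by omega⟩
        · simp only [f, Prod.mk.injEq] at hww'
          have h₁ := Nat.div_add_mod w q
          have h₂ := Nat.div_add_mod w' q
          rw [hww'.1] at h₁
          have := hres w hw
          have := hres w' hw'
          by_contra hne
          rcases Nat.lt_or_gt_of_ne hne with h | h
          · exact hsucc w hw (by rwa [show w + 1 = w' by omega])
          · exact hsucc w' hw' (by rwa [show w' + 1 = w by omega])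
    _ = p * a := by simp

theorem Nat.mul_add_le_mul_of_lt {s t : ℕ} (n : ℕ) (h : s < t) : s * n + n ≤ t * n := by
  simpa [Nat.succ_mul] using Nat.mul_le_mul_right n h

theorem Nat.card_filter_range_mul_dvd {p q : ℕ} (hq : q ≠ 0) :
    #{w ∈ range (p * q) | q ∣ w} = p := by
  have : {w ∈ range (p * q) | q ∣ w} = (range p).image (· * q) := by
    ext w
    simp only [mem_filter, mem_range, mem_image]
    constructor
    · rintro ⟨hw, s, rfl⟩
      exact ⟨s, Nat.lt_of_mul_lt_mul_right (by rwa [mul_comm] at hw), mul_comm s q⟩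
    · rintro ⟨s, hs, rfl⟩
      exact ⟨Nat.mul_lt_mul_of_pos_right hs (Nat.pos_of_ne_zero hq), dvd_mul_left q s⟩
  rw [this, Finset.card_image_of_injective _ (mul_left_injective₀ hq), card_range]

namespace ConstrRel

abbrev graph (k p : ℕ) : SimpleGraph (Bool × ZMod k) := fromRel (ConstrRel k p)

variable {k p : ℕ}

theorem not_adj_x_x (i j : ZMod k) : ¬ (graph k p).Adj (false, i) (false, j) := by
  simp [ConstrRel]

theorem adj_x_y_iff (i j : ZMod k) :
    (graph k p).Adj (false, i) (true, j) ↔ i.val % (k / p) ≠ j.val % (k / p) := by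
  simp [ConstrRel]

theorem adj_y_y_iff (i j : ZMod k) :
    (graph k p).Adj (true, i) (true, j) ↔ i ≠ j ∧ i - j ≠ 1 ∧ j - i ≠ 1 := by
  simp [ConstrRel]
  tauto

theorem adj_y_add_y_add (i : ZMod k) {o o' : ℕ} (h₁ : o + 2 ≤ o') (h₂ : o' + 2 ≤ o + k) :
    (graph k p).Adj (true, i + o) (true, i + o') := by
  have hd : (i + o') - (i + o) = ((o' - o : ℕ) : ZMod k) := by
    push_cast [Nat.cast_sub (by omega : o ≤ o')]; ring
  have hk : 1 < k := by omega
  refine (adj_y_y_iff _ _).2 ⟨fun h => ?_, fun h => ?_, fun h => ?_⟩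
  · have : ((o' - o : ℕ) : ZMod k) = 0 := by rw [← hd, h, sub_self]
    rw [ZMod.natCast_eq_zero_iff] at this
    exact Nat.not_dvd_of_pos_of_lt (by omega) (by omega) this
  · have : ((o' - o + 1 : ℕ) : ZMod k) = 0 := by push_cast; rw [← hd, ← h]; ring
    rw [ZMod.natCast_eq_zero_iff] at this
    exact Nat.not_dvd_of_pos_of_lt (by omega) (by omega) this
  · rw [hd, ← Nat.cast_one, ZMod.natCast_eq_natCast_iff', Nat.mod_eq_of_lt (by omega),
      Nat.mod_eq_of_lt hk] at h
    omega

section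

variable {q : ℕ} [NeZero k]

theorem adj_x_add_y_add_iff (hk : k = p * q) (i : ZMod k) (w o : ℕ) :
    (graph k p).Adj (false, i + w) (true, i + o) ↔ ¬ w ≡ o [MOD q] := by
  have hp : p ≠ 0 := left_ne_zero_of_mul (hk ▸ NeZero.ne k)
  have hq : q ∣ k := hk ▸ dvd_mul_left q p
  have hkp : k / p = q := by rw [hk, Nat.mul_div_cancel_left q (Nat.pos_of_ne_zero hp)]
  rw [adj_x_y_iff, hkp, ZMod.val_add_natCast_mod hq, ZMod.val_add_natCast_mod hq]
  exact not_congr ⟨Nat.ModEq.add_left_cancel' _, Nat.ModEq.add_left _⟩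

theorem adj_x_y_add_iff (hk : k = p * q) (i : ZMod k) (o : ℕ) :
    (graph k p).Adj (false, i) (true, i + o) ↔ ¬ q ∣ o := by
  simpa [Nat.modEq_zero_iff_dvd, Nat.ModEq.comm] using adj_x_add_y_add_iff hk i 0 o

end

theorem add_one_notMem_of_isClique {S : Finset (Bool × ZMod k)} (hS : (graph k p).IsClique S)
    (hk : (1 : ZMod k) ≠ 0) {j : ZMod k} (hj : (true, j) ∈ S) : (true, j + 1) ∉ S := fun h =>
  ((adj_y_y_iff _ _).1 (hS hj h (by simpa using hk))).2.2 (add_sub_cancel_left j 1)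

theorem cliqueFree {a : ℕ} (hk : k = p * (2 * a + 1)) (hp : 2 ≤ p) (hp' : p ≤ 3) :
    (graph k p).CliqueFree (p * a + 2) := by
  classical
  have hk2 : 2 ≤ k := hk ▸ le_mul_of_le_of_one_le hp (by omega)
  have : NeZero k := ⟨by omega⟩
  have : Fact (1 < k) := ⟨hk2⟩
  intro S hS
  let X : Finset (ZMod k) := {i | (false, i) ∈ S}
  let Y : Finset (ZMod k) := {j | (true, j) ∈ S}
  have hXY : #S ≤ #X + #Y := by
    calc #S ≤ #(X.image (false, ·) ∪ Y.image (true, ·)) := by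
          refine card_le_card fun ⟨b, i⟩ hv => ?_
          cases b <;> simp [X, Y, hv]
      _ ≤ #X + #Y := (card_union_le _ _).trans (add_le_add card_image_le card_image_le)
  have hX : #X ≤ 1 := card_le_one.2 fun i hi j hj => by
    by_contra hij
    simp only [X, mem_filter, mem_univ, true_and] at hi hj
    exact not_adj_x_x i j (hS.1 hi hj (by simpa using hij))
  have hY : ∀ j ∈ Y, j + 1 ∉ Y := fun j hj => by
    simp only [Y, mem_filter, mem_univ, true_and] at hj ⊢
    exact add_one_notMem_of_isClique hS.1 one_ne_zero hj
  suffices #X + #Y ≤ p * a + 1 by have := hS.2; omega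
  obtain hX₀ | ⟨i₀, hi₀⟩ := X.eq_empty_or_nonempty
  · have := ZMod.two_mul_card_le_of_add_one_notMem Y hY
    rw [hX₀, card_empty]
    have : k = 2 * (p * a) + p := by rw [hk]; ring
    omega
  · simp only [X, mem_filter, mem_univ, true_and] at hi₀
    have hoff := ZMod.add_natCast_val_sub i₀
    have hW : #(Y.image fun j => (j - i₀).val) ≤ p * a := by
      refine Nat.card_le_of_not_dvd_of_add_one_notMem _ (by simp [← hk, ZMod.val_lt]) ?_ ?_
      · simp only [mem_image, forall_exists_index, and_imp]
        rintro _ j hj rfl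
        simp only [Y, mem_filter, mem_univ, true_and] at hj
        rw [← adj_x_y_add_iff hk, hoff]
        exact hS.1 hi₀ hj (by simp)
      · simp only [mem_image, forall_exists_index, and_imp, not_exists, not_and]
        rintro _ j hj rfl j' hj' hjj'
        have : j' = j + 1 := by rw [← hoff j', hjj', Nat.cast_succ, ← add_assoc, hoff j]
        exact hY j hj (this ▸ hj')
    rw [card_image_of_injective _ fun j j' h => sub_left_injective (ZMod.val_injective k h)] at hW
    omega

/-- For `x = (s, c)`: the residue `t s c` taken in the `s`-th block of length `2 * a + 1`. -/
def blockOffset (a : ℕ) (t : ℕ → ℕ → ℕ) (x : ℕ × ℕ) : ℕ := x.1 * (2 * a + 1) + t x.1 x.2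

section blockOffset

variable {a : ℕ} {t : ℕ → ℕ → ℕ}

theorem blockOffset_mod (x : ℕ × ℕ) (ht : t x.1 x.2 ≤ 2 * a) :
    blockOffset a t x % (2 * a + 1) = t x.1 x.2 :=
  Nat.mul_add_mod_of_lt (by omega)

theorem blockOffset_bounds (ht : ∀ s < p, ∀ c < a, 1 ≤ t s c ∧ t s c ≤ 2 * a) {x : ℕ × ℕ}
    (hx : x ∈ range p ×ˢ range a) :
    1 ≤ blockOffset a t x ∧ blockOffset a t x + 1 ≤ p * (2 * a + 1) := by
  simp only [mem_product, mem_range] at hx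
  have := ht _ hx.1 _ hx.2
  have := Nat.mul_add_le_mul_of_lt (2 * a + 1) hx.1
  unfold blockOffset
  omega

theorem blockOffset_sep (ht : ∀ s < p, ∀ c < a, 1 ≤ t s c ∧ t s c ≤ 2 * a)
    (hmono : ∀ s < p, ∀ c c', c < c' → c' < a → t s c + 2 ≤ t s c') {x y : ℕ × ℕ}
    (hx : x ∈ range p ×ˢ range a) (hy : y ∈ range p ×ˢ range a) (hxy : x ≠ y) :
    blockOffset a t x + 2 ≤ blockOffset a t y ∨ blockOffset a t y + 2 ≤ blockOffset a t x := by
  obtain ⟨s, c⟩ := x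
  obtain ⟨s', c'⟩ := y
  simp only [mem_product, mem_range] at hx hy
  have := ht _ hx.1 _ hx.2
  have := ht _ hy.1 _ hy.2
  simp only [blockOffset]
  rcases lt_trichotomy s s' with h | rfl | h
  · have := Nat.mul_add_le_mul_of_lt (2 * a + 1) h; omega
  · have hcc' : c ≠ c' := fun h => hxy (by rw [h])
    rcases Nat.lt_or_gt_of_ne hcc' with h | h
    · have := hmono s hx.1 c c' h hy.2; omega
    · have := hmono s hx.1 c' c h hx.2; omega
  · have := Nat.mul_add_le_mul_of_lt (2 * a + 1) h; omega

end blockOffset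

theorem isNClique_blocks {a : ℕ} (hk : k = p * (2 * a + 1)) (i : ZMod k) (t : ℕ → ℕ → ℕ)
    (ht : ∀ s < p, ∀ c < a, 1 ≤ t s c ∧ t s c ≤ 2 * a)
    (hmono : ∀ s < p, ∀ c c', c < c' → c' < a → t s c + 2 ≤ t s c') :
    (graph k p).IsNClique (p * a)
      ((range p ×ˢ range a).image fun x => (true, i + (blockOffset a t x : ZMod k))) := by
  subst hk
  refine ⟨?_, ?_⟩
  · simp only [coe_image, IsClique, Set.Pairwise, Set.mem_image, mem_coe]
    rintro _ ⟨x, hx, rfl⟩ _ ⟨y, hy, rfl⟩ hne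
    have hxy : x ≠ y := fun h => hne (by rw [h])
    have := blockOffset_bounds ht hx
    have := blockOffset_bounds ht hy
    rcases blockOffset_sep ht hmono hx hy hxy with h | h
    · exact adj_y_add_y_add i h (by omega)
    · exact (adj_y_add_y_add i h (by omega)).symm
  · rw [card_image_of_injOn, card_product, card_range, card_range]
    intro x hx y hy hxy
    simp only [Prod.mk.injEq, true_and, add_right_inj, ZMod.natCast_eq_natCast_iff'] at hxy
    have := blockOffset_bounds ht hx
    have := blockOffset_bounds ht hy
    rw [Nat.mod_eq_of_lt (by omega), Nat.mod_eq_of_lt (by omega)] at hxy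
    by_contra hne
    have := blockOffset_sep ht hmono hx hy hne
    omega

section

variable [NeZero k] {a : ℕ}

theorem exists_isNClique_common_x_x (hk : k = p * (2 * a + 1)) (i j : ZMod k) :
    ∃ T : Finset (Bool × ZMod k), (graph k p).IsNClique (p * a) T ∧
      ∀ v ∈ T, (graph k p).Adj (false, i) v ∧ (graph k p).Adj (false, j) v := by
  have hj := ZMod.add_natCast_val_sub i j
  set d := (j - i).val % (2 * a + 1)
  -- in every block, the odd residues below `d` and the even ones above it
  let t : ℕ → ℕ → ℕ := fun _ c => if 2 * c + 1 < d then 2 * c + 1 else 2 * c + 2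
  have ht : ∀ s < p, ∀ c < a, 1 ≤ t s c ∧ t s c ≤ 2 * a := by
    intro s _ c _; simp only [t]; split <;> omega
  have hmono : ∀ s < p, ∀ c c', c < c' → c' < a → t s c + 2 ≤ t s c' := by
    intro s _ c c' _ _; simp only [t]; split <;> split <;> omega
  refine ⟨_, isNClique_blocks hk i t ht hmono, ?_⟩
  simp only [mem_image]
  rintro _ ⟨⟨s, c⟩, hsc, rfl⟩
  obtain ⟨hs, hc⟩ : s < p ∧ c < a := by simpa using hsc
  have hres := blockOffset_mod (a := a) (t := t) (s, c) (ht s hs c hc).2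
  refine ⟨?_, ?_⟩
  · rw [adj_x_y_add_iff hk, Nat.dvd_iff_mod_eq_zero, hres]
    exact Nat.one_le_iff_ne_zero.1 (ht s hs c hc).1
  · rw [← hj, adj_x_add_y_add_iff hk, Nat.ModEq, hres]
    simp only [t]; split <;> omega

theorem exists_isNClique_common_x_y (hk : k = p * (2 * a + 1)) {i j : ZMod k} (hij : i ≠ j)
    (hadj : ¬ (graph k p).Adj (false, i) (true, j)) :
    ∃ T : Finset (Bool × ZMod k), (graph k p).IsNClique (p * a) T ∧
      ∀ v ∈ T, (graph k p).Adj (false, i) v ∧ (graph k p).Adj (true, j) v := by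
  set m := (i - j).val
  have hi : j + (m : ZMod k) = i := ZMod.add_natCast_val_sub j i
  have hm : 2 * a + 1 ∣ m := by
    have := (adj_x_add_y_add_iff hk j m 0).not.1 (by rwa [Nat.cast_zero, add_zero, hi])
    exact Nat.modEq_zero_iff_dvd.1 (not_not.1 this)
  have hmk : m < k := ZMod.val_lt _
  have hm0 : m ≠ 0 := fun h => hij (by rw [← hi, h, Nat.cast_zero, add_zero])
  have hp : 2 ≤ p := by
    by_contra! h
    have := Nat.le_of_dvd (Nat.pos_of_ne_zero hm0) hm
    have := Nat.mul_le_mul_right (2 * a + 1) (Nat.le_of_lt_succ h)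
    omega
  -- offsets from `j`, kept in `[2, k - 2]`: even residues in the first block, odd ones after
  let t : ℕ → ℕ → ℕ := fun s c => if s = 0 then 2 * c + 2 else 2 * c + 1
  have ht : ∀ s < p, ∀ c < a, 1 ≤ t s c ∧ t s c ≤ 2 * a := by
    intro s _ c _; simp only [t]; split <;> omega
  have hmono : ∀ s < p, ∀ c c', c < c' → c' < a → t s c + 2 ≤ t s c' := by
    intro s _ c c' _ _; simp only [t]; split <;> omega
  refine ⟨_, isNClique_blocks hk j t ht hmono, ?_⟩
  simp only [mem_image]
  rintro _ ⟨⟨s, c⟩, hsc, rfl⟩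
  obtain ⟨hs, hc⟩ : s < p ∧ c < a := by simpa using hsc
  have hres := blockOffset_mod (a := a) (t := t) (s, c) (ht s hs c hc).2
  refine ⟨?_, ?_⟩
  · rw [← hi, adj_x_add_y_add_iff hk, Nat.ModEq, hres, Nat.mod_eq_zero_of_dvd hm]
    exact (Nat.one_le_iff_ne_zero.1 (ht s hs c hc).1).symm
  · have ho : 2 ≤ blockOffset a t (s, c) ∧ blockOffset a t (s, c) + 2 ≤ k := by
      have hlast := hk ▸ Nat.mul_add_le_mul_of_lt (2 * a + 1) hs
      simp only [blockOffset, t]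
      rcases Nat.eq_zero_or_pos s with rfl | hs₀
      · have := hk ▸ Nat.mul_le_mul_right (2 * a + 1) hp
        simp only [if_pos, zero_mul, zero_add]
        omega
      · have := Nat.le_mul_of_pos_left (2 * a + 1) hs₀
        rw [if_neg hs₀.ne']
        omega
    have := adj_y_add_y_add (p := p) j (o := 0) ho.1 (by omega)
    rwa [Nat.cast_zero, add_zero] at this

end

theorem ncard_neighborSet_x [NeZero k] {q : ℕ} (hk : k = p * q) (i : ZMod k) :
    ((graph k p).neighborSet (false, i)).ncard = k - p := by
  have hq : q ≠ 0 := right_ne_zero_of_mul (hk ▸ NeZero.ne k)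
  have hset : (graph k p).neighborSet (false, i) =
      (fun w : ℕ => (true, i + (w : ZMod k))) '' ↑({w ∈ range k | ¬ q ∣ w}) := by
    ext ⟨b, j⟩
    cases b
    · simp only [mem_neighborSet, Set.mem_image, Prod.mk.injEq, Bool.true_eq_false, false_and,
        and_false, exists_false, iff_false]
      exact not_adj_x_x i j
    · have hj := ZMod.add_natCast_val_sub i j
      simp only [mem_neighborSet, Set.mem_image, coe_filter, mem_range,
        Prod.mk.injEq, true_and]
      constructor
      · intro h
        exact ⟨(j - i).val, ⟨ZMod.val_lt _, by rwa [← adj_x_y_add_iff hk, hj]⟩, hj⟩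
      · rintro ⟨w, ⟨-, hw⟩, rfl⟩
        exact (adj_x_y_add_iff hk i w).2 hw
  have hinj :
      Set.InjOn (fun w : ℕ => (true, i + (w : ZMod k))) ↑({w ∈ range k | ¬ q ∣ w}) := by
    intro w hw w' hw' h
    simp only [coe_filter, mem_range] at hw hw'
    simp only [Prod.mk.injEq, true_and, add_right_inj, ZMod.natCast_eq_natCast_iff',
      Nat.mod_eq_of_lt hw.1, Nat.mod_eq_of_lt hw'.1] at h
    exact h
  have := card_filter_add_card_filter_not (s := range k) (q ∣ ·)
  rw [hk, Nat.card_filter_range_mul_dvd hq, card_range] at this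
  rw [hset, hinj.ncard_image, Set.ncard_coe_finset, hk]
  omega

end ConstrRel

theorem stmt_13 (r p : ℕ) (hr : 3 ≤ r) (hp : p = 2 ∨ p = 3) (hdvd : p ∣ r - 2)
    (G : SimpleGraph (Bool × ZMod (2 * r - 4 + p)))
    (hG : G = SimpleGraph.fromRel (ConstrRel (2 * r - 4 + p) p)) :
    G.CliqueFree r ∧
    -- every pair x_i, x_j with i ≠ j has an (r-2)-clique in its common neighborhood
    (∀ i j : ZMod (2 * r - 4 + p), i ≠ j →
      ∃ T : Finset (Bool × ZMod (2 * r - 4 + p)), G.IsNClique (r - 2) T ∧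
        ∀ v ∈ T, G.Adj (false, i) v ∧ G.Adj (false, j) v) ∧
    -- every non-adjacent pair x_i, y_j from different parts has an (r-2)-clique
    -- in its common neighborhood
    (∀ i j : ZMod (2 * r - 4 + p), i ≠ j → ¬ G.Adj (false, i) (true, j) →
      ∃ T : Finset (Bool × ZMod (2 * r - 4 + p)), G.IsNClique (r - 2) T ∧
        ∀ v ∈ T, G.Adj (false, i) v ∧ G.Adj (true, j) v) ∧
    -- each x_i has degree exactly 2r - 4
    (∀ i : ZMod (2 * r - 4 + p), (G.neighborSet (false, i)).ncard = 2 * r - 4) := by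
  subst hG
  obtain ⟨a, ha⟩ := hdvd
  have hk : 2 * r - 4 + p = p * (2 * a + 1) := by
    rw [mul_add, mul_one, mul_left_comm, ← ha]; omega
  have : NeZero (2 * r - 4 + p) := ⟨by omega⟩
  refine ⟨?_, fun i j _ => ha ▸ ConstrRel.exists_isNClique_common_x_x hk i j,
    fun i j hij hadj => ha ▸ ConstrRel.exists_isNClique_common_x_y hk hij hadj,
    fun i => by rw [ConstrRel.ncard_neighborSet_x hk]; omega⟩
  have := ConstrRel.cliqueFree hk (by omega) (by omega)
  rwa [show p * a + 2 = r by omega] at this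
end

section
/- For k ≥ r ≥ 3, if k = 2r-3, or (k ≥ 2r-2 and r is even), or (k ≥ 2r-1 and r ≡ 2 mod 3), then α(k, r) = k(2r - 4). -/
open SimpleGraph

/-- A `k`-partite graph with partition map `P` is `K_r`-partite-saturated. -/
def PartiteSaturated {V : Type} (k r : ℕ) (G : SimpleGraph V) (P : V → Fin k) : Prop :=
  (∀ u v, G.Adj u v → P u ≠ P v) ∧ G.CliqueFree r ∧
  ∀ u v, P u ≠ P v → ¬ G.Adj u v →
    ¬ (G ⊔ SimpleGraph.fromEdgeSet {s(u, v)}).CliqueFree r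

/-- `m` is the number of edges between an independent transversal `X` and its complement
in a `K_r`-partite-saturated `k`-partite graph. -/
def AlphaWitness (k r m : ℕ) : Prop :=
  ∃ (n : ℕ) (G : SimpleGraph (Fin n)) (P : Fin n → Fin k) (x : Fin k → Fin n),
    PartiteSaturated k r G P ∧ (∀ i, P (x i) = i) ∧
    (∀ i j, ¬ G.Adj (x i) (x j)) ∧
    m = ∑ i : Fin k, (G.neighborSet (x i)).ncard

noncomputable def alpha (k r : ℕ) : ℕ := sInf {m | AlphaWitness k r m}

/-!
Lower bound. For `j ≠ i`, adding the edge `x_i x_j` creates a `K_r`, so `x_i` and `x_j` have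
`r - 2` common neighbours forming a clique `C_j`. These are maximum cliques of the
`K_{r-1}`-free neighbourhood `N(x_i)`, so Hajnal's lemma gives
`|⋃ C_j| + |⋂ C_j| ≥ 2(r - 2)`. The intersection is empty: a vertex `v` in it lies in
`C_{P v}`, hence is adjacent to `x_{P v}`, which is in its own part. Thus `deg x_i ≥ 2r - 4`.

Upper bound. Write `r = cw + 2` with `c = 1` if `k = 2r - 3`, `c = 2` if `r` is even and
`c = 3` if `r ≡ 2 (mod 3)`, so that `m = c(2w + 1) ≤ k`, with `m = k` if `c = 1`. The core is
the complement of the cycle on `ZMod m`, core vertex `z` lying in part `z`, and `x_i` is joined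
to the core vertices `z ≢ i (mod 2w + 1)`, so `deg x_i = m - c = 2r - 4`. A clique meets the
transversal at most once, an independent set of the cycle has at most `⌊m/2⌋ ≤ cw + 1` vertices
and at most `cw` if it avoids a residue class, so the graph is `K_r`-free. Every missing edge
between distinct parts is completed to a `K_r` by core vertices at explicit offsets, pairwise
non-consecutive on the cycle and avoiding the relevant residue classes.
-/

open Finset

namespace SimpleGraph

variable {V W : Type*} {G : SimpleGraph V}

lemma Iso.cliqueFree_iff {H : SimpleGraph W} (f : G ≃g H) {n : ℕ} :
    G.CliqueFree n ↔ H.CliqueFree n := by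
  rw [← not_iff_not, not_cliqueFree_iff_top_isContained, not_cliqueFree_iff_top_isContained,
    isContained_congr_right f]

lemma comap_sup_edge (G : SimpleGraph V) (e : W ≃ V) (u v : W) :
    G.comap e ⊔ edge u v = (G ⊔ edge (e u) (e v)).comap e := by
  ext a b
  simp only [comap_adj, sup_adj, edge_adj, ne_eq, e.apply_eq_iff_eq]

lemma exists_isNClique_forall_adj_of_not_cliqueFree_sup_edge [DecidableEq V] {r : ℕ} {x y : V}
    (hG : G.CliqueFree r) (h : ¬ (G ⊔ edge x y).CliqueFree r) :
    ∃ s : Finset V, G.IsNClique (r - 2) s ∧ ∀ z ∈ s, G.Adj x z ∧ G.Adj y z := by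
  obtain ⟨t, ht⟩ := not_forall_not.1 h
  have hxy : x ≠ y := by rintro rfl; exact h (by rwa [sup_edge_self])
  have hx := hG.mem_of_sup_edge_isNClique ht
  have hy := hG.mem_of_sup_edge_isNClique (edge_comm x y ▸ ht)
  have htx := ht.erase_of_sup_edge_of_mem hx
  have hty := (edge_comm x y ▸ ht).erase_of_sup_edge_of_mem hy
  refine ⟨(t.erase x).erase y, ?_, fun z hz => ?_⟩
  · simpa [Nat.sub_sub] using htx.erase_of_mem (mem_erase.2 ⟨hxy.symm, hy⟩)
  · obtain ⟨hzy, hzx, hzt⟩ : z ≠ y ∧ z ≠ x ∧ z ∈ t := by simpa using hz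
    exact ⟨hty.1 (mem_erase.2 ⟨hxy, hx⟩) (mem_erase.2 ⟨hzy, hzt⟩) hzx.symm,
      htx.1 (mem_erase.2 ⟨hxy.symm, hy⟩) (mem_erase.2 ⟨hzx, hzt⟩) hzy.symm⟩

lemma not_cliqueFree_sup_edge_of_isNClique [DecidableEq V] {u v : V} {s : Finset V} {n : ℕ}
    (huv : u ≠ v) (hs : G.IsNClique n s) (hu : ∀ x ∈ s, G.Adj u x) (hv : ∀ x ∈ s, G.Adj v x) :
    ¬ (G ⊔ edge u v).CliqueFree (n + 2) := by
  have hvs : (G ⊔ edge u v).IsNClique (n + 1) (insert v s) :=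
    (hs.mono le_sup_left).insert fun x hx => Or.inl (hv x hx)
  refine fun hfree => hfree _ (hvs.insert (a := u) ?_)
  simp only [mem_insert, forall_eq_or_imp]
  exact ⟨Or.inr ((edge_adj ..).2 ⟨Or.inl ⟨rfl, rfl⟩, huv⟩), fun x hx => Or.inl (hu x hx)⟩

lemma CliqueFreeOn.card_le_of_isClique_s14 {N : Set V} {s : ℕ} (hN : G.CliqueFreeOn N (s + 1))
    {D : Finset V} (hDN : ↑D ⊆ N) (hD : G.IsClique (D : Set V)) : #D ≤ s := by
  by_contra! h
  exact CliqueFreeOn.mono G h hN hDN ⟨hD, rfl⟩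

/-- The exchange step of Hajnal's lemma: `(D \ X) ∪ (A \ D)` is again a clique in `N`. -/
lemma card_sdiff_le_of_forall_not_adj_mem [DecidableEq V] {N : Set V} {s : ℕ}
    (hN : G.CliqueFreeOn N (s + 1)) {A D X : Finset V} (hA : G.IsClique (A : Set V))
    (hAN : ↑A ⊆ N) (hD : G.IsNClique s D) (hDN : ↑D ⊆ N)
    (hX : ∀ d ∈ D, ∀ a ∈ A \ D, ¬ G.Adj d a → d ∈ X) : #(A \ D) ≤ #X := by
  have : Std.Symm G.Adj := G.symm
  have hclique : G.IsClique (↑((D \ X) ∪ (A \ D)) : Set V) := by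
    rw [coe_union, IsClique, Set.pairwise_union_of_symm]
    refine ⟨hD.1.subset (by simp), hA.subset (by simp), fun d hd a ha _ => ?_⟩
    by_contra hnadj
    exact (mem_sdiff.1 hd).2 (hX d (mem_sdiff.1 hd).1 a ha hnadj)
  have hcard := hN.card_le_of_isClique_s14 (by
    rw [coe_union]
    exact Set.union_subset ((coe_subset.2 sdiff_subset).trans hDN)
      ((coe_subset.2 sdiff_subset).trans hAN)) hclique
  rw [card_union_of_disjoint (disjoint_sdiff.mono_left sdiff_subset)] at hcard
  have := le_card_sdiff X D
  have := hD.2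
  omega

/-- Hajnal's lemma, for a family of maximum cliques of `G` inside `N`. -/
theorem two_mul_le_card_sup_add_card_inf' [DecidableEq V] {ι : Type*} {s : ℕ} {N : Set V}
    (hN : G.CliqueFreeOn N (s + 1)) (C : ι → Finset V) {J : Finset ι} (hJ : J.Nonempty)
    (hC : ∀ j ∈ J, ↑(C j) ⊆ N ∧ G.IsNClique s (C j)) :
    2 * s ≤ #(J.sup C) + #(J.inf' hJ C) := by
  classical
  induction hJ using Finset.Nonempty.cons_induction with
  | singleton j => simp [(hC j (mem_singleton_self j)).2.2, two_mul]
  | cons j J hj hJ ih =>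
    rw [sup_cons, inf'_cons hJ, sup_eq_union, inf_eq_inter]
    have ih := ih fun i hi => hC i (mem_cons_of_mem hi)
    obtain ⟨hDN, hD⟩ := hC j (mem_cons_self j J)
    have hA : ∀ i ∈ J, J.inf' hJ C ⊆ C i := fun i hi => inf'_le C hi
    have ⟨i₀, hi₀⟩ := hJ
    obtain ⟨hCN, hCclique⟩ := hC i₀ (mem_cons_of_mem hi₀)
    -- A vertex of `C j` lying in some `C i`, `i ∈ J`, is adjacent to all of `J.inf' hJ C`.
    let X : Finset V := {d ∈ C j | ∃ a ∈ J.inf' hJ C \ C j, ¬ G.Adj d a}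
    have hXU : X ⊆ C j \ J.sup C := by
      intro d hd
      obtain ⟨hdD, a, ha, hda⟩ := mem_filter.1 hd
      refine mem_sdiff.2 ⟨hdD, fun hdU => hda ?_⟩
      obtain ⟨i, hi, hdi⟩ := mem_sup.1 hdU
      refine (hC i (mem_cons_of_mem hi)).2.1 hdi (hA i hi (mem_sdiff.1 ha).1) ?_
      rintro rfl
      exact (mem_sdiff.1 ha).2 hdD
    have hexch := card_sdiff_le_of_forall_not_adj_mem (X := X) hN
      (hCclique.1.subset (coe_subset.2 (hA i₀ hi₀))) ((coe_subset.2 (hA i₀ hi₀)).trans hCN) hD hDN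
      fun d hd a ha hda => mem_filter.2 ⟨hd, a, ha, hda⟩
    have := card_le_card hXU
    have := card_sdiff_add_card (C j) (J.sup C)
    have := card_inter_add_card_sdiff (J.inf' hJ C) (C j)
    rw [inter_comm] at this
    have := hD.2
    omega

end SimpleGraph

lemma ZMod.natCast_ne_zero_of_lt {m n : ℕ} (h0 : 0 < n) (hn : n < m) : (n : ZMod m) ≠ 0 := by
  rw [Ne, ZMod.natCast_eq_zero_iff]
  exact fun h => (Nat.le_of_dvd h0 h).not_gt hn

lemma add_two_le_of_lt {f : ℕ → ℕ} {N : ℕ} (hstep : ∀ ℓ, ℓ + 1 < N → f ℓ + 2 ≤ f (ℓ + 1))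
    {ℓ ℓ' : ℕ} (h : ℓ < ℓ') (h' : ℓ' < N) : f ℓ + 2 ≤ f ℓ' := by
  induction ℓ' with
  | zero => omega
  | succ a ih =>
    have := hstep a h'
    rcases Nat.lt_or_ge ℓ a with hℓ | hℓ
    · have := ih hℓ (by omega); omega
    · obtain rfl : ℓ = a := by omega
      exact this

lemma eq_or_eq_add_one_of_pair_eq {t a b : ℕ} (hdiv : a / t = b / t) (ha : a % t ≠ 0)
    (hb : b % t ≠ 0) (hpair : (a % t - 1) / 2 = (b % t - 1) / 2) :
    b = a ∨ b = a + 1 ∨ a = b + 1 := by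
  have := Nat.div_add_mod a t
  have := Nat.div_add_mod b t
  rw [hdiv] at *
  omega

def residue (c w : ℕ) : ZMod (c * (2 * w + 1)) →+* ZMod (2 * w + 1) :=
  ZMod.castHom (dvd_mul_left _ c) _

lemma residue_add_natCast_ne {c w : ℕ} (b : ZMod (c * (2 * w + 1))) {n : ℕ}
    {g : ZMod (2 * w + 1)} (h : n % (2 * w + 1) ≠ g.val) :
    residue c w (b + n) ≠ residue c w b + g := by
  rw [map_add, map_natCast, Ne, add_right_inj, ← ZMod.natCast_zmod_val g,
    ZMod.natCast_eq_natCast_iff', Nat.mod_eq_of_lt (ZMod.val_lt g)]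
  exact h

namespace SimpleGraph

abbrev cycleCompl (m : ℕ) : SimpleGraph (ZMod m) := (circulantGraph {1})ᶜ

variable {m : ℕ}

lemma cycleCompl_adj {a b : ZMod m} :
    (cycleCompl m).Adj a b ↔ a ≠ b ∧ a - b ≠ 1 ∧ b - a ≠ 1 := by
  simp only [compl_adj, circulantGraph_adj, Set.mem_singleton_iff]
  tauto

lemma cycleCompl_adj_add_natCast (z : ZMod m) {n : ℕ} (h2 : 2 ≤ n) (hn : n + 2 ≤ m) :
    (cycleCompl m).Adj z (z + n) := by
  have h1 : ((1 : ℕ) : ZMod m) ≠ n := by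
    rw [Ne, ZMod.natCast_eq_natCast_iff', Nat.mod_eq_of_lt (by omega),
      Nat.mod_eq_of_lt (by omega)]
    omega
  refine cycleCompl_adj.2 ⟨fun h => ZMod.natCast_ne_zero_of_lt (m := m) (n := n)
    (by omega) (by omega) ?_, fun h => ZMod.natCast_ne_zero_of_lt (m := m) (n := n + 1)
    (by omega) (by omega) ?_, fun h => h1 ?_⟩
  · linear_combination (-1 : ZMod m) * h
  · push_cast; linear_combination (-1 : ZMod m) * h
  · push_cast; linear_combination (-1 : ZMod m) * h

lemma two_mul_card_le_of_isClique_cycleCompl [NeZero m] (hm : m ≠ 1) {I : Finset (ZMod m)}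
    (hI : (cycleCompl m).IsClique (I : Set (ZMod m))) : 2 * #I ≤ m := by
  have : Nontrivial (ZMod m) := ZMod.nontrivial_iff.2 hm
  have hdisj : Disjoint I (I.map (addRightEmbedding 1)) := by
    refine Finset.disjoint_left.2 fun z hz hz' => ?_
    obtain ⟨y, hy, rfl⟩ := mem_map.1 hz'
    exact (cycleCompl_adj.1 (hI hy hz (by simp))).2.2 (by simp)
  calc 2 * #I = #(I ∪ I.map (addRightEmbedding 1)) := by
        rw [card_union_of_disjoint hdisj, card_map, two_mul]
    _ ≤ Fintype.card (ZMod m) := card_le_univ _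
    _ = m := ZMod.card m

lemma isNClique_cycleCompl_image_add_natCast (b : ZMod m) {f : ℕ → ℕ} {N : ℕ}
    (hstep : ∀ ℓ, ℓ + 1 < N → f ℓ + 2 ≤ f (ℓ + 1)) (hspan : ∀ ℓ < N, f ℓ + 2 ≤ f 0 + m) :
    (cycleCompl m).IsNClique N ((range N).image fun ℓ => b + (f ℓ : ZMod m)) := by
  have hadj {ℓ ℓ' : ℕ} (h : ℓ < ℓ') (h' : ℓ' < N) :
      (cycleCompl m).Adj (b + (f ℓ : ZMod m)) (b + (f ℓ' : ZMod m)) := by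
    have hle := add_two_le_of_lt hstep h h'
    have h0 : f 0 ≤ f ℓ := by
      rcases Nat.eq_zero_or_pos ℓ with rfl | hpos
      · rfl
      · have := add_two_le_of_lt hstep hpos (by omega); omega
    have := cycleCompl_adj_add_natCast (b + (f ℓ : ZMod m)) (n := f ℓ' - f ℓ) (by omega)
      (by have := hspan ℓ' h'; omega)
    rwa [Nat.cast_sub (by omega), add_add_sub_cancel] at this
  refine ⟨?_, ?_⟩
  · simp only [coe_image, coe_range]
    rintro _ ⟨ℓ, hℓ, rfl⟩ _ ⟨ℓ', hℓ', rfl⟩ hne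
    rcases lt_trichotomy ℓ ℓ' with h | rfl | h
    · exact hadj h hℓ'
    · exact absurd rfl hne
    · exact (hadj h hℓ).symm
  · rw [card_image_of_injOn, card_range]
    intro ℓ hℓ ℓ' hℓ' heq
    simp only [coe_range, Set.mem_Iio] at hℓ hℓ'
    by_contra hne
    rcases Nat.lt_or_gt_of_ne hne with h | h
    · exact (hadj h hℓ').ne heq
    · exact (hadj h hℓ).ne heq.symm

lemma card_le_of_isClique_cycleCompl_of_residue_ne {c w : ℕ} [NeZero c]
    {I : Finset (ZMod (c * (2 * w + 1)))}
    (hI : (cycleCompl _).IsClique (I : Set (ZMod (c * (2 * w + 1)))))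
    (g : ZMod (2 * w + 1)) (hg : ∀ z ∈ I, residue c w z ≠ g) :
    #I ≤ c * w := by
  have ht : 0 < 2 * w + 1 := by omega
  -- Measured from a vertex `g₀` of the avoided class, the vertices of `I` lie in `c` blocks of
  -- `2w` consecutive positions, and no two of them share a pair `{2s + 1, 2s + 2}` of a block.
  let g₀ : ZMod (c * (2 * w + 1)) := (g.val : ZMod _)
  let d (z : ZMod (c * (2 * w + 1))) : ℕ := (z - g₀).val
  have hz (z : ZMod (c * (2 * w + 1))) : z = g₀ + (d z : ZMod _) := by simp [d]
  have hdmod : ∀ z ∈ I, d z % (2 * w + 1) ≠ 0 := by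
    intro z hzI hdvd
    apply hg z hzI
    have : ((d z : ℕ) : ZMod (2 * w + 1)) = 0 :=
      (ZMod.natCast_eq_zero_iff _ _).2 (Nat.dvd_of_mod_eq_zero hdvd)
    rw [hz z, map_add, map_natCast _ (d z), this, add_zero, map_natCast, ZMod.natCast_zmod_val]
  calc #I ≤ #(range c ×ˢ range w) := by
        refine card_le_card_of_injOn (fun z => (d z / (2 * w + 1), (d z % (2 * w + 1) - 1) / 2))
          (fun z hzI => ?_) fun z hzI z' hz'I heq => ?_
        · have := Nat.mod_lt (d z) ht
          have := hdmod z hzI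
          simp only [coe_product, coe_range, Set.mem_prod, Set.mem_Iio]
          exact ⟨Nat.div_lt_of_lt_mul (mul_comm c _ ▸ ZMod.val_lt _), by omega⟩
        · simp only [Prod.mk.injEq] at heq
          have hcases := eq_or_eq_add_one_of_pair_eq heq.1 (hdmod z hzI) (hdmod z' hz'I) heq.2
          by_contra hne
          have hadj := cycleCompl_adj.1 (hI hzI hz'I hne)
          rw [hz z, hz z'] at hadj
          rcases hcases with h | h | h
          · exact hadj.1 (by rw [h])
          · exact hadj.2.2 (by rw [h]; push_cast; ring)
          · exact hadj.2.1 (by rw [h]; push_cast; ring)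
    _ = c * w := by simp

end SimpleGraph

lemma PartiteSaturated.comap {V W : Type} {k r : ℕ} {G : SimpleGraph V} {P : V → Fin k}
    (h : PartiteSaturated k r G P) (e : W ≃ V) : PartiteSaturated k r (G.comap e) (P ∘ e) := by
  obtain ⟨hprop, hfree, hsat⟩ := h
  refine ⟨fun u v huv => hprop _ _ huv, (Iso.comap e G).cliqueFree_iff.2 hfree,
    fun u v hP hnadj => ?_⟩
  change ¬ (G.comap e ⊔ edge u v).CliqueFree r
  rw [comap_sup_edge, (Iso.comap e _).cliqueFree_iff]
  exact hsat _ _ hP hnadj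

lemma alphaWitness_of_partiteSaturated {V : Type} [Fintype V] {k r : ℕ} {G : SimpleGraph V}
    {P : V → Fin k} (hG : PartiteSaturated k r G P) {x : Fin k → V} (hx : ∀ i, P (x i) = i)
    (hind : ∀ i j, ¬ G.Adj (x i) (x j)) :
    AlphaWitness k r (∑ i, (G.neighborSet (x i)).ncard) := by
  let e := (Fintype.equivFin V).symm
  refine ⟨_, G.comap e, P ∘ e, e.symm ∘ x, hG.comap e, by simp [hx], by simp [hind],
    sum_congr rfl fun i _ => ?_⟩
  refine (Set.ncard_preimage_of_injective_subset_range e.injective (by simp)).symm.trans ?_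
  congr 1
  ext v
  simp

lemma PartiteSaturated.two_mul_le_ncard_neighborSet {V : Type} [Finite V] {k r : ℕ}
    {G : SimpleGraph V} {P : V → Fin k} (hG : PartiteSaturated k r G P) {x : Fin k → V}
    (hx : ∀ i, P (x i) = i) (hind : ∀ i j, ¬ G.Adj (x i) (x j)) (hk : 2 ≤ k) (hr : 2 ≤ r)
    (i : Fin k) : 2 * (r - 2) ≤ (G.neighborSet (x i)).ncard := by
  classical
  obtain ⟨hprop, hfree, hsat⟩ := hG
  have hcommon (j : {j // j ≠ i}) : ∃ s : Finset V,
      G.IsNClique (r - 2) s ∧ ∀ z ∈ s, G.Adj (x i) z ∧ G.Adj (x j) z :=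
    exists_isNClique_forall_adj_of_not_cliqueFree_sup_edge hfree
      (hsat _ _ (by simpa [hx] using j.2.symm) (hind _ _))
  choose C hC using hcommon
  obtain ⟨r, rfl⟩ : ∃ r', r = r' + 2 := ⟨r - 2, by omega⟩
  have hN : G.CliqueFreeOn (G.neighborSet (x i)) (r + 1) := by
    simpa using CliqueFreeOn.of_succ G ((cliqueFreeOn_univ G).2 hfree) (Set.mem_univ (x i))
  obtain ⟨k, rfl⟩ : ∃ k', k = k' + 2 := ⟨k - 2, by omega⟩
  obtain ⟨j₀, hj₀⟩ := exists_ne i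
  have hJ : (univ : Finset {j // j ≠ i}).Nonempty := ⟨⟨j₀, hj₀⟩, mem_univ _⟩
  have hbound := two_mul_le_card_sup_add_card_inf' hN C hJ
    fun j _ => ⟨fun z hz => ((hC j).2 z hz).1, by simpa using (hC j).1⟩
  have hinf : univ.inf' hJ C = ∅ := by
    refine eq_empty_of_forall_notMem fun v hv => ?_
    have hvC (j : {j // j ≠ i}) : v ∈ C j := inf'_le C (mem_univ j) hv
    have hvi : P v ≠ i := by
      simpa [hx, eq_comm] using hprop _ _ ((hC ⟨j₀, hj₀⟩).2 v (hvC _)).1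
    simpa [hx] using hprop _ _ ((hC ⟨P v, hvi⟩).2 v (hvC _)).2
  have hsup : #(univ.sup C) ≤ (G.neighborSet (x i)).ncard := by
    rw [← Set.ncard_coe_finset]
    refine Set.ncard_le_ncard fun z hz => ?_
    obtain ⟨j, -, hzj⟩ := mem_sup.1 (mem_coe.1 hz)
    exact ((hC j).2 z hzj).1
  simp only [hinf, card_empty, add_zero] at hbound
  omega

lemma AlphaWitness.mul_le {k r m : ℕ} (h : AlphaWitness k r m) (hk : 2 ≤ k) (hr : 2 ≤ r) :
    k * (2 * r - 4) ≤ m := by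
  obtain ⟨n, G, P, x, hG, hx, hind, rfl⟩ := h
  calc k * (2 * r - 4) = ∑ _i : Fin k, 2 * (r - 2) := by simp; omega
    _ ≤ _ := sum_le_sum fun i _ => hG.two_mul_le_ncard_neighborSet hx hind hk hr i

/-- The `j`-th of `w` pairwise non-consecutive positions in `1, …, 2w` that avoid `e`:
odd positions below `e`, even ones above it. -/
def slot (e j : ℕ) : ℕ := 2 * j + 1 + if e ≤ 2 * j + 1 then e % 2 else 0

lemma slot_ne (e j : ℕ) : slot e j ≠ e := by unfold slot; split_ifs <;> omega

lemma slot_pos (e j : ℕ) : 0 < slot e j := by unfold slot; omega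

lemma slot_le (e j : ℕ) : slot e j ≤ 2 * j + 2 := by unfold slot; split_ifs <;> omega

lemma slot_add_two_le (e j : ℕ) : slot e j + 2 ≤ slot e (j + 1) := by
  unfold slot; split_ifs <;> omega

lemma slot_zero (j : ℕ) : slot 0 j = 2 * j + 1 := by simp [slot]

/-- Offsets, in blocks of length `2w + 1`, of `w` core vertices per block avoiding the residues
`0` and `e` modulo `2w + 1`. -/
def pickOffset (w e ℓ : ℕ) : ℕ := (2 * w + 1) * (ℓ / w) + slot e (ℓ % w)

lemma pickOffset_pos (w e ℓ : ℕ) : 0 < pickOffset w e ℓ :=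
  (slot_pos _ _).trans_le (Nat.le_add_left _ _)

lemma pickOffset_mul_add {w : ℕ} (e q : ℕ) {j : ℕ} (hj : j < w) :
    pickOffset w e (w * q + j) = (2 * w + 1) * q + slot e j := by
  rw [pickOffset, Nat.mul_add_div (by omega), Nat.div_eq_of_lt hj, Nat.mul_add_mod,
    Nat.mod_eq_of_lt hj, add_zero]

lemma pickOffset_mod {w : ℕ} (hw : 0 < w) (e ℓ : ℕ) :
    pickOffset w e ℓ % (2 * w + 1) = slot e (ℓ % w) := by
  have := slot_le e (ℓ % w)
  have := Nat.mod_lt ℓ hw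
  rw [pickOffset, Nat.mul_add_mod, Nat.mod_eq_of_lt (by omega)]

lemma pickOffset_add_two_le {w : ℕ} (hw : 0 < w) (e ℓ : ℕ) :
    pickOffset w e ℓ + 2 ≤ pickOffset w e (ℓ + 1) := by
  obtain ⟨q, j, hj, rfl⟩ : ∃ q j, j < w ∧ ℓ = w * q + j :=
    ⟨ℓ / w, ℓ % w, Nat.mod_lt ℓ hw, (Nat.div_add_mod ℓ w).symm⟩
  rw [pickOffset_mul_add e q hj]
  rcases Nat.lt_or_ge (j + 1) w with h | h
  · rw [show w * q + j + 1 = w * q + (j + 1) by ring, pickOffset_mul_add e q h]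
    have := slot_add_two_le e j
    omega
  · rw [show w * q + j + 1 = w * (q + 1) + 0 by rw [Nat.mul_succ]; omega,
      pickOffset_mul_add e (q + 1) hw]
    have := slot_le e j
    have := slot_pos e 0
    rw [Nat.mul_succ]
    omega

lemma pickOffset_add_le {w c : ℕ} (e : ℕ) {ℓ : ℕ} (hℓ : ℓ < c * w) :
    pickOffset w e ℓ + 2 * w + 1 ≤ c * (2 * w + 1) + slot e (ℓ % w) := by
  have hq : ℓ / w + 1 ≤ c := Nat.div_lt_of_lt_mul (by rwa [mul_comm])
  have := Nat.mul_le_mul_left (2 * w + 1) hq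
  rw [pickOffset, mul_comm c]
  linarith

lemma pickOffset_lt {w c : ℕ} (hw : 0 < w) (e : ℕ) {ℓ : ℕ} (hℓ : ℓ < c * w) :
    pickOffset w e ℓ < c * (2 * w + 1) := by
  have := pickOffset_add_le e hℓ
  have := slot_le e (ℓ % w)
  have := Nat.mod_lt ℓ hw
  omega

lemma pickOffset_zero_add_two_le {w c : ℕ} (hw : 0 < w) {ℓ : ℕ} (hℓ : ℓ < c * w) :
    pickOffset w 0 ℓ + 2 ≤ c * (2 * w + 1) := by
  have h := pickOffset_add_le 0 hℓ
  rw [slot_zero] at h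
  have := Nat.mod_lt ℓ hw
  omega

lemma pickOffset_zero_add_four_le {w c : ℕ} (hw : 0 < w) {ℓ : ℕ} (hℓ : ℓ + 1 < c * w) :
    pickOffset w 0 ℓ + 4 ≤ c * (2 * w + 1) := by
  have := pickOffset_add_two_le hw 0 ℓ
  have := pickOffset_zero_add_two_le (c := c) hw hℓ
  omega

/-- Like `pickOffset w 0`, but with the first block moved up by one, off the neighbours of `0`
in the cycle. -/
def pickOffsetFromTwo (w ℓ : ℕ) : ℕ := if ℓ < w then 2 * ℓ + 2 else pickOffset w 0 ℓ

lemma pickOffsetFromTwo_add_two_le {w : ℕ} (hw : 0 < w) (ℓ : ℕ) :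
    pickOffsetFromTwo w ℓ + 2 ≤ pickOffsetFromTwo w (ℓ + 1) := by
  unfold pickOffsetFromTwo
  split_ifs with h₁ h₂
  · omega
  · have := pickOffset_mul_add 0 1 hw
    rw [slot_zero] at this
    rw [show ℓ + 1 = w * 1 + 0 by omega, this]
    omega
  · omega
  · exact pickOffset_add_two_le hw 0 ℓ

lemma pickOffsetFromTwo_mod_ne_zero {w : ℕ} (hw : 0 < w) (ℓ : ℕ) :
    pickOffsetFromTwo w ℓ % (2 * w + 1) ≠ 0 := by
  unfold pickOffsetFromTwo
  split_ifs with h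
  · rw [Nat.mod_eq_of_lt (by omega)]; omega
  · rw [pickOffset_mod hw]; exact (slot_pos 0 _).ne'

lemma two_le_pickOffsetFromTwo {w : ℕ} (hw : 0 < w) (ℓ : ℕ) : 2 ≤ pickOffsetFromTwo w ℓ := by
  unfold pickOffsetFromTwo pickOffset
  split_ifs with h
  · omega
  · have : 1 ≤ ℓ / w := (Nat.le_div_iff_mul_le hw).2 (by omega)
    have := Nat.le_mul_of_pos_right (2 * w + 1) this
    omega

lemma pickOffsetFromTwo_add_two_le_mul {w c : ℕ} (hw : 0 < w) (hc : 2 ≤ c) {ℓ : ℕ}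
    (hℓ : ℓ < c * w) : pickOffsetFromTwo w ℓ + 2 ≤ c * (2 * w + 1) := by
  unfold pickOffsetFromTwo
  split_ifs with h
  · have := Nat.mul_le_mul_right (2 * w + 1) hc
    omega
  · exact pickOffset_zero_add_two_le hw hℓ

section Construction

def extremalGraph (k c w : ℕ) : SimpleGraph (Fin k ⊕ ZMod (c * (2 * w + 1))) where
  Adj
    | .inl _, .inl _ => False
    | .inl i, .inr z => residue c w z ≠ (i : ℕ)
    | .inr z, .inl i => residue c w z ≠ (i : ℕ)
    | .inr a, .inr b => (cycleCompl _).Adj a b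
  symm := ⟨by
    rintro (i | a) (j | b) h
    exacts [h, h, h, h.symm]⟩
  loopless := ⟨by
    rintro (i | a) h
    exacts [h, (cycleCompl _).loopless.irrefl a h]⟩

variable {k c w : ℕ}

@[simp] lemma extremalGraph_adj_inl_inl {i j : Fin k} :
    ¬ (extremalGraph k c w).Adj (.inl i) (.inl j) := id

@[simp] lemma extremalGraph_adj_inl_inr {i : Fin k} {z : ZMod (c * (2 * w + 1))} :
    (extremalGraph k c w).Adj (.inl i) (.inr z) ↔ residue c w z ≠ (i : ℕ) := Iff.rfl

@[simp] lemma extremalGraph_adj_inr_inl {i : Fin k} {z : ZMod (c * (2 * w + 1))} :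
    (extremalGraph k c w).Adj (.inr z) (.inl i) ↔ residue c w z ≠ (i : ℕ) := Iff.rfl

@[simp] lemma extremalGraph_adj_inr_inr {a b : ZMod (c * (2 * w + 1))} :
    (extremalGraph k c w).Adj (.inr a) (.inr b) ↔ (cycleCompl _).Adj a b := Iff.rfl

lemma extremalGraph_isNClique_map_inr {n : ℕ} {S : Finset (ZMod (c * (2 * w + 1)))}
    (hS : (cycleCompl _).IsNClique n S) :
    (extremalGraph k c w).IsNClique n (S.map .inr) := by
  refine ⟨?_, by rw [card_map, hS.2]⟩
  simp only [coe_map, Function.Embedding.inr_apply]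
  rintro _ ⟨a, ha, rfl⟩ _ ⟨b, hb, rfl⟩ hab
  exact hS.1 ha hb fun h => hab (h ▸ rfl)

lemma not_cliqueFree_sup_edge_inl_inl (hw : 0 < w) {i j : Fin k} (hij : i ≠ j) :
    ¬ (extremalGraph k c w ⊔ edge (.inl i) (.inl j)).CliqueFree (c * w + 2) := by
  let e : ZMod (2 * w + 1) := (j : ℕ) - (i : ℕ)
  let b : ZMod (c * (2 * w + 1)) := (i : ℕ)
  have hb : residue c w b = (i : ℕ) := map_natCast _ _
  have hS : (cycleCompl _).IsNClique (c * w)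
      ((range (c * w)).image fun ℓ => b + (pickOffset w e.val ℓ : ZMod _)) := by
    refine isNClique_cycleCompl_image_add_natCast b (fun ℓ _ => pickOffset_add_two_le hw _ ℓ)
      fun ℓ hℓ => ?_
    have := pickOffset_lt hw e.val hℓ
    have := pickOffset_pos w e.val 0
    omega
  refine not_cliqueFree_sup_edge_of_isNClique (by simpa using hij)
    (extremalGraph_isNClique_map_inr hS) ?_ ?_ <;>
  simp only [mem_map, mem_image, mem_range, Function.Embedding.inr_apply] <;>
  rintro _ ⟨_, ⟨ℓ, -, rfl⟩, rfl⟩ <;>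
  rw [extremalGraph_adj_inl_inr]
  · have := residue_add_natCast_ne b (g := 0) (n := pickOffset w e.val ℓ)
      (by rw [pickOffset_mod hw, ZMod.val_zero]; exact (slot_pos _ _).ne')
    rwa [hb, add_zero] at this
  · have := residue_add_natCast_ne b (g := e) (n := pickOffset w e.val ℓ)
      (by rw [pickOffset_mod hw]; exact slot_ne _ _)
    rwa [hb, add_sub_cancel] at this

lemma not_cliqueFree_sup_edge_inl_inr (hw : 0 < w) (hc : 2 ≤ c) {i : Fin k}
    {z : ZMod (c * (2 * w + 1))} (hz : residue c w z = (i : ℕ)) :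
    ¬ (extremalGraph k c w ⊔ edge (.inl i) (.inr z)).CliqueFree (c * w + 2) := by
  have hS : (cycleCompl _).IsNClique (c * w)
      ((range (c * w)).image fun ℓ => z + (pickOffsetFromTwo w ℓ : ZMod _)) := by
    refine isNClique_cycleCompl_image_add_natCast z
      (fun ℓ _ => pickOffsetFromTwo_add_two_le hw ℓ) fun ℓ hℓ => ?_
    have := pickOffsetFromTwo_add_two_le_mul hw hc hℓ
    have := two_le_pickOffsetFromTwo hw 0
    omega
  refine not_cliqueFree_sup_edge_of_isNClique (by simp)
    (extremalGraph_isNClique_map_inr hS) ?_ ?_ <;>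
  simp only [mem_map, mem_image, mem_range, Function.Embedding.inr_apply] <;>
  rintro _ ⟨_, ⟨ℓ, hℓ, rfl⟩, rfl⟩
  · rw [extremalGraph_adj_inl_inr]
    have := residue_add_natCast_ne z (g := 0) (n := pickOffsetFromTwo w ℓ)
      (by rw [ZMod.val_zero]; exact pickOffsetFromTwo_mod_ne_zero hw ℓ)
    rwa [hz, add_zero] at this
  · exact cycleCompl_adj_add_natCast z (two_le_pickOffsetFromTwo hw ℓ)
      (pickOffsetFromTwo_add_two_le_mul hw hc hℓ)

variable [NeZero c]

def extremalPart (hmk : c * (2 * w + 1) ≤ k) : Fin k ⊕ ZMod (c * (2 * w + 1)) → Fin k :=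
  Sum.elim id fun z => ⟨z.val, (ZMod.val_lt z).trans_le hmk⟩

lemma residue_eq_extremalPart (hmk : c * (2 * w + 1) ≤ k) (z : ZMod (c * (2 * w + 1))) :
    residue c w z = ((extremalPart hmk (.inr z) : ℕ) : ZMod (2 * w + 1)) := by
  simp [extremalPart, ← map_natCast (residue c w)]

lemma extremalGraph_adj_extremalPart_ne (hmk : c * (2 * w + 1) ≤ k)
    {u v : Fin k ⊕ ZMod (c * (2 * w + 1))} (h : (extremalGraph k c w).Adj u v) :
    extremalPart hmk u ≠ extremalPart hmk v := by
  rcases u with i | a <;> rcases v with j | b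
  · exact h.elim
  · rintro rfl
    exact h (residue_eq_extremalPart hmk b)
  · intro he
    exact h (by rw [residue_eq_extremalPart hmk a, he]; rfl)
  · intro he
    exact (cycleCompl_adj.1 h).1 (ZMod.val_injective _ (Fin.ext_iff.1 he))

lemma extremalGraph_cliqueFree (hw : 0 < w) (hc : c ≤ 3) :
    (extremalGraph k c w).CliqueFree (c * w + 2) := by
  intro T hT
  have hcard := card_toLeft_add_card_toRight (u := T)
  have hT2 := hT.2
  have hcore : (cycleCompl _).IsClique (T.toRight : Set (ZMod (c * (2 * w + 1)))) :=
    fun a ha b hb hab => hT.1 (mem_toRight.1 ha) (mem_toRight.1 hb) (by simpa using hab)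
  have hm : c * (2 * w + 1) = 2 * (c * w) + c := by ring
  obtain h | h | h : #T.toLeft = 0 ∨ #T.toLeft = 1 ∨ 1 < #T.toLeft := by omega
  · have := two_mul_card_le_of_isClique_cycleCompl
      (by have := NeZero.pos c; nlinarith) hcore
    omega
  · obtain ⟨i, hi⟩ := card_eq_one.1 h
    have hiT : .inl i ∈ T := mem_toLeft.1 (hi ▸ mem_singleton_self i)
    have := card_le_of_isClique_cycleCompl_of_residue_ne hcore ((i : ℕ) : ZMod (2 * w + 1))
      fun z hz => hT.1 hiT (mem_toRight.1 hz) (by simp)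
    omega
  · obtain ⟨i, hi, j, hj, hij⟩ := one_lt_card.1 h
    exact hT.1 (mem_toLeft.1 hi) (mem_toLeft.1 hj) (by simpa using hij)

lemma card_filter_residue_eq (g : ZMod (2 * w + 1)) : #{z | residue c w z = g} = c := by
  have hsurj := ZMod.castHom_surjective (dvd_mul_left (2 * w + 1) c)
  have hfiber (g' : ZMod (2 * w + 1)) : #{z | residue c w z = g'} = #{z | residue c w z = g} :=
    AddMonoidHom.card_fiber_eq_of_mem_range (residue c w) (hsurj g') (hsurj g)
  have := card_eq_sum_card_fiberwise (f := residue c w) (s := univ) (t := univ) (by simp)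
  rw [sum_congr rfl fun g' _ => hfiber g', sum_const, card_univ, card_univ, ZMod.card, ZMod.card,
    smul_eq_mul] at this
  exact (Nat.eq_of_mul_eq_mul_left (by omega) (this.symm.trans (mul_comm _ _)))

lemma ncard_neighborSet_extremalGraph_inl (i : Fin k) :
    ((extremalGraph k c w).neighborSet (.inl i)).ncard = 2 * (c * w) := by
  have hN : (extremalGraph k c w).neighborSet (.inl i) =
      Sum.inr '' ↑({z | residue c w z ≠ (i : ℕ)} : Finset (ZMod (c * (2 * w + 1)))) := by
    ext (j | z) <;> simp
  have hsplit := card_filter_add_card_filter_not (s := univ)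
    (p := fun z : ZMod (c * (2 * w + 1)) => residue c w z = (i : ℕ))
  rw [card_filter_residue_eq, card_univ, ZMod.card] at hsplit
  rw [hN, Set.ncard_image_of_injective _ Sum.inr_injective, Set.ncard_coe_finset]
  have : c * (2 * w + 1) = 2 * (c * w) + c := by ring
  simp only [ne_eq]
  omega

/-- The clique completing the missing cycle edge between `q - 2` and `q - 1`. -/
def cycleEdgeClique (hmk : c * (2 * w + 1) ≤ k) (q : ZMod (c * (2 * w + 1))) :
    Finset (Fin k ⊕ ZMod (c * (2 * w + 1))) :=
  insert (.inl (extremalPart hmk (.inr q)))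
    (((range (c * w - 1)).image fun ℓ => q + (pickOffset w 0 ℓ : ZMod _)).map .inr)

lemma isNClique_cycleEdgeClique (hw : 0 < w) (hmk : c * (2 * w + 1) ≤ k)
    (q : ZMod (c * (2 * w + 1))) :
    (extremalGraph k c w).IsNClique (c * w - 1 + 1) (cycleEdgeClique hmk q) := by
  have hS : (cycleCompl _).IsNClique (c * w - 1)
      ((range (c * w - 1)).image fun ℓ => q + (pickOffset w 0 ℓ : ZMod _)) := by
    refine isNClique_cycleCompl_image_add_natCast q
      (fun ℓ _ => pickOffset_add_two_le hw 0 ℓ) fun ℓ hℓ => ?_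
    have := pickOffset_zero_add_four_le (c := c) hw (ℓ := ℓ) (by omega)
    omega
  refine (extremalGraph_isNClique_map_inr hS).insert ?_
  simp only [mem_map, mem_image, mem_range, Function.Embedding.inr_apply]
  rintro _ ⟨_, ⟨ℓ, -, rfl⟩, rfl⟩
  have := residue_add_natCast_ne q (g := 0) (n := pickOffset w 0 ℓ)
    (by rw [pickOffset_mod hw, ZMod.val_zero]; exact (slot_pos _ _).ne')
  rwa [residue_eq_extremalPart hmk q, add_zero] at this

lemma extremalGraph_adj_sub_of_mem_cycleEdgeClique (hw : 0 < w) (hmk : c * (2 * w + 1) ≤ k)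
    (q : ZMod (c * (2 * w + 1))) {j : ℕ} (hj : 0 < j) (hj' : j ≤ 2) :
    ∀ x ∈ cycleEdgeClique hmk q, (extremalGraph k c w).Adj (.inr (q - (j : ZMod _))) x := by
  simp only [cycleEdgeClique, mem_insert, mem_map, mem_image, mem_range,
    Function.Embedding.inr_apply, forall_eq_or_imp, forall_exists_index, and_imp]
  refine ⟨?_, fun _ _ ℓ hℓ hx ha => ?_⟩
  · rw [extremalGraph_adj_inr_inl, ← residue_eq_extremalPart hmk]
    have := residue_add_natCast_ne (q - (j : ZMod _)) (g := 0) (n := j)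
      (by rw [ZMod.val_zero, Nat.mod_eq_of_lt (by omega)]; omega)
    simpa using this.symm
  · subst hx ha
    have := cycleCompl_adj_add_natCast (q - (j : ZMod _)) (n := j + pickOffset w 0 ℓ)
      (by have := pickOffset_pos w 0 ℓ; omega)
      (by have := pickOffset_zero_add_four_le (c := c) hw (ℓ := ℓ) (by omega); omega)
    rwa [Nat.cast_add, ← add_assoc, sub_add_cancel] at this

lemma not_cliqueFree_sup_edge_inr_inr_add_one (hw : 0 < w) (hmk : c * (2 * w + 1) ≤ k)
    (z : ZMod (c * (2 * w + 1))) :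
    ¬ (extremalGraph k c w ⊔ edge (.inr z) (.inr (z + 1))).CliqueFree (c * w + 2) := by
  have h1 : (1 : ZMod (c * (2 * w + 1))) ≠ 0 := by
    exact_mod_cast ZMod.natCast_ne_zero_of_lt (m := c * (2 * w + 1)) (n := 1) one_pos
      (by nlinarith [NeZero.pos c])
  have hz : z = z + 2 - ((2 : ℕ) : ZMod _) := by push_cast; ring
  have hz1 : z + 1 = z + 2 - ((1 : ℕ) : ZMod _) := by push_cast; ring
  have h2 := extremalGraph_adj_sub_of_mem_cycleEdgeClique hw hmk (z + 2) two_pos le_rfl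
  have h1' := extremalGraph_adj_sub_of_mem_cycleEdgeClique hw hmk (z + 2) one_pos one_le_two
  rw [← hz] at h2
  rw [← hz1] at h1'
  have := not_cliqueFree_sup_edge_of_isNClique (by simpa using h1)
    (isNClique_cycleEdgeClique hw hmk (z + 2)) h2 h1'
  rwa [show c * w - 1 + 1 + 2 = c * w + 2 by have := Nat.mul_pos (NeZero.pos c) hw; omega]
    at this

lemma extremalGraph_partiteSaturated (hw : 0 < w) (hc : c ≤ 3) (hmk : c * (2 * w + 1) ≤ k)
    (hk : k = c * (2 * w + 1) ∨ 2 ≤ c) :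
    PartiteSaturated k (c * w + 2) (extremalGraph k c w) (extremalPart hmk) := by
  refine ⟨fun u v => extremalGraph_adj_extremalPart_ne hmk, extremalGraph_cliqueFree hw hc, ?_⟩
  have hinl_inr (i : Fin k) (z : ZMod (c * (2 * w + 1))) (hP : i ≠ extremalPart hmk (.inr z))
      (hnadj : ¬ (extremalGraph k c w).Adj (.inl i) (.inr z)) :
      ¬ (extremalGraph k c w ⊔ edge (.inl i) (.inr z)).CliqueFree (c * w + 2) := by
    rw [extremalGraph_adj_inl_inr, not_not] at hnadj
    by_cases hc2 : 2 ≤ c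
    · exact not_cliqueFree_sup_edge_inl_inr hw hc2 hnadj
    -- For `c = 1` we have `k = 2w + 1`, and `inl i` misses only the core vertex in part `i`.
    obtain rfl : c = 1 := by have := NeZero.pos c; omega
    rw [residue_eq_extremalPart hmk, ZMod.natCast_eq_natCast_iff', Nat.mod_eq_of_lt (by omega),
      Nat.mod_eq_of_lt (by omega)] at hnadj
    exact absurd (Fin.ext hnadj).symm hP
  intro u v hP hnadj
  change ¬ (extremalGraph k c w ⊔ edge u v).CliqueFree _
  rcases u with i | a <;> rcases v with j | b
  · exact not_cliqueFree_sup_edge_inl_inl hw (by simpa [extremalPart] using hP)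
  · exact hinl_inr i b hP hnadj
  · rw [edge_comm]
    exact hinl_inr j a hP.symm fun h => hnadj h.symm
  · have hab : a ≠ b := by rintro rfl; exact hP rfl
    rw [extremalGraph_adj_inr_inr, cycleCompl_adj] at hnadj
    rcases not_and_or.1 (not_and.1 hnadj hab) with h | h <;>
      obtain rfl := sub_eq_iff_eq_add'.1 (not_not.1 h)
    · rw [edge_comm]
      exact not_cliqueFree_sup_edge_inr_inr_add_one hw hmk b
    · exact not_cliqueFree_sup_edge_inr_inr_add_one hw hmk a

lemma alphaWitness_extremalGraph (hw : 0 < w) (hc : c ≤ 3) (hmk : c * (2 * w + 1) ≤ k)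
    (hk : k = c * (2 * w + 1) ∨ 2 ≤ c) :
    AlphaWitness k (c * w + 2) (k * (2 * (c * w + 2) - 4)) := by
  have := alphaWitness_of_partiteSaturated (extremalGraph_partiteSaturated hw hc hmk hk)
    (x := Sum.inl) (fun _ => rfl) fun _ _ => extremalGraph_adj_inl_inl
  simp only [ncard_neighborSet_extremalGraph_inl, sum_const, card_univ, Fintype.card_fin,
    smul_eq_mul] at this
  convert this using 2
  omega

end Construction

theorem stmt_14_general (k r : ℕ) (hr : 3 ≤ r)
    (hcase : k = 2 * r - 3 ∨ (2 * r - 2 ≤ k ∧ r % 2 = 0) ∨ (2 * r - 1 ≤ k ∧ r % 3 = 2)) :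
    alpha k r = k * (2 * r - 4) := by
  obtain ⟨c, w, hc, hc3, hw, hmk, hk, rfl⟩ : ∃ c w, 0 < c ∧ c ≤ 3 ∧ 0 < w ∧
      c * (2 * w + 1) ≤ k ∧ (k = c * (2 * w + 1) ∨ 2 ≤ c) ∧ r = c * w + 2 := by
    rcases hcase with h | ⟨h, h'⟩ | ⟨h, h'⟩
    · exact ⟨1, r - 2, by omega, by omega, by omega, by omega, by omega, by omega⟩
    · exact ⟨2, r / 2 - 1, by omega, by omega, by omega, by omega, by omega, by omega⟩
    · exact ⟨3, r / 3, by omega, by omega, by omega, by omega, by omega, by omega⟩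
  have : NeZero c := ⟨hc.ne'⟩
  have hW := alphaWitness_extremalGraph hw hc3 hmk hk
  exact le_antisymm (Nat.sInf_le hW)
    (le_csInf ⟨_, hW⟩ fun m hm => hm.mul_le (by omega) (by omega))

theorem stmt_14 (k r : ℕ) (hr : 3 ≤ r) (hkr : r ≤ k)
    (hcase : k = 2 * r - 3 ∨ (2 * r - 2 ≤ k ∧ r % 2 = 0) ∨ (2 * r - 1 ≤ k ∧ r % 3 = 2)) :
    alpha k r = k * (2 * r - 4) :=
  stmt_14_general k r hr hcase
end

section
/- Let r ≥ 4 and let G be a K_r-partite-saturated r-partite graph with parts V_1,...,V_r containing an independent set X = {x_1,...,x_r} with x_i ∈ V_i. Call y ∈ V_i \ {x_i} 'i'-special' if y is the only neighbor of x_{i'} in V_i. Then: (a) a special vertex y ∈ V_i is adjacent to every x_j with j ≠ i; (b) each part V_i contains at most one special vertex. -/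
/-!
Adding a missing edge `x i' x j` creates an `r`-clique, which must contain both `x i'` and `x j`
and, being an `r`-clique of an `r`-partite graph, meets every part. Its vertex in the part of a
special vertex `y` is a neighbour of `x i'` there, hence is `y`, so `y` is adjacent to `x j`.
For (b), if `y` and `z` are special for `x i'` and `x j'` in the same part, then by (a) `y` is a
neighbour of `x j'` in that part, and `z` is the only one.
-/

open SimpleGraph

namespace SimpleGraph

variable {V α : Type*} {G : SimpleGraph V}

def Coloring.supEdge (C : G.Coloring α) {v w : V} (h : C v ≠ C w) :
    (G ⊔ edge v w).Coloring α :=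
  Coloring.mk C fun {a b} hab => by
    rcases hab with hab | hab
    · exact C.valid hab
    · rcases ((edge_adj ..).1 hab).1 with ⟨rfl, rfl⟩ | ⟨rfl, rfl⟩
      exacts [h, h.symm]

lemma IsNClique.exists_mem_color_eq [Fintype α] {K : Finset V}
    (hK : G.IsNClique (Fintype.card α) K) (C : G.Coloring α) (c : α) : ∃ u ∈ K, C u = c := by
  classical
  have hinj : Set.InjOn C K := fun u hu v hv huv => by
    by_contra hne
    exact C.valid (hK.1 hu hv hne) huv
  have himage : K.image C = Finset.univ :=
    Finset.eq_univ_of_card _ (by rw [Finset.card_image_of_injOn hinj, hK.2])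
  rw [← Finset.mem_image, himage]
  exact Finset.mem_univ c

lemma adj_of_not_cliqueFree_sup_edge {r : ℕ} (C : G.Coloring (Fin r)) (hfree : G.CliqueFree r)
    {a b y : V} (hab : C a ≠ C b) (hsat : ¬ (G ⊔ edge a b).CliqueFree r) (hay : G.Adj a y)
    (huniq : ∀ z, C z = C y → G.Adj a z → z = y) (hby : C b ≠ C y) : G.Adj y b := by
  obtain ⟨K, hK⟩ := not_forall_not.1 hsat
  have ha : a ∈ K := hfree.mem_of_sup_edge_isNClique hK
  have hb : b ∈ K := hfree.mem_of_sup_edge_isNClique (edge_comm .. ▸ hK)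
  obtain ⟨u, huK, hu⟩ := (Fintype.card_fin r ▸ hK).exists_mem_color_eq (C.supEdge hab) (C y)
  change C u = C y at hu
  have hua : u ≠ a := fun h => C.valid hay (by rwa [← h])
  have hub : u ≠ b := fun h => hby (by rwa [← h])
  have hau : G.Adj a u :=
    (edge_comm .. ▸ hK).1.sdiff_of_sup_edge ⟨ha, hab ∘ congrArg C⟩ ⟨huK, hub⟩ hua.symm
  obtain rfl : u = y := huniq u hu hau
  exact hK.1.sdiff_of_sup_edge ⟨huK, hua⟩ ⟨hb, hab.symm ∘ congrArg C⟩ hub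

end SimpleGraph

theorem stmt_16_general {V : Type} (r : ℕ)
    (G : SimpleGraph V) (P : V → Fin r) (x : Fin r → V)
    (hpart : ∀ u v, G.Adj u v → P u ≠ P v)
    (hfree : G.CliqueFree r)
    (hsat : ∀ u v, P u ≠ P v → ¬ G.Adj u v →
      ¬ (G ⊔ SimpleGraph.fromEdgeSet {s(u, v)}).CliqueFree r)
    (hx : ∀ i, P (x i) = i)
    (hind : ∀ i j, ¬ G.Adj (x i) (x j)) :
    -- (a) a special vertex y is adjacent to every x j with j ≠ P y
    (∀ y : V, ∀ i' : Fin r,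
      G.Adj (x i') y → (∀ z, P z = P y → G.Adj (x i') z → z = y) →
      ∀ j : Fin r, j ≠ P y → G.Adj y (x j)) ∧
    -- (b) each part contains at most one special vertex
    (∀ y z : V,
      (∃ i', G.Adj (x i') y ∧ ∀ w, P w = P y → G.Adj (x i') w → w = y) →
      (∃ j', G.Adj (x j') z ∧ ∀ w, P w = P z → G.Adj (x j') w → w = z) →
      P y = P z → y = z) := by
  have special_adj : ∀ y : V, ∀ i' : Fin r,
      G.Adj (x i') y → (∀ z, P z = P y → G.Adj (x i') z → z = y) →
      ∀ j : Fin r, j ≠ P y → G.Adj y (x j) := by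
    intro y i' hy huniq j hj
    by_cases hji : j = i'
    · exact hji ▸ hy.symm
    have hxx : P (x i') ≠ P (x j) := by rw [hx, hx]; exact Ne.symm hji
    exact adj_of_not_cliqueFree_sup_edge (Coloring.mk P fun h => hpart _ _ h) hfree hxx
      (hsat _ _ hxx (hind i' j)) hy huniq (show P (x j) ≠ P y by rwa [hx])
  refine ⟨special_adj, ?_⟩
  rintro y z ⟨i', hy, hy_uniq⟩ ⟨j', hz, hz_uniq⟩ hyz
  have hj' : j' ≠ P y := fun h => hpart _ _ hz (by rw [hx, h, hyz])
  exact hz_uniq y hyz (special_adj y i' hy hy_uniq j' hj').symm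

theorem stmt_16 {V : Type} [Fintype V] (r : ℕ) (hr : 4 ≤ r)
    (G : SimpleGraph V) (P : V → Fin r) (x : Fin r → V)
    (hpart : ∀ u v, G.Adj u v → P u ≠ P v)
    (hfree : G.CliqueFree r)
    (hsat : ∀ u v, P u ≠ P v → ¬ G.Adj u v →
      ¬ (G ⊔ SimpleGraph.fromEdgeSet {s(u, v)}).CliqueFree r)
    (hx : ∀ i, P (x i) = i)
    (hind : ∀ i j, ¬ G.Adj (x i) (x j)) :
    -- (a) a special vertex y is adjacent to every x j with j ≠ P y
    (∀ y : V, ∀ i' : Fin r,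
      G.Adj (x i') y → (∀ z, P z = P y → G.Adj (x i') z → z = y) →
      ∀ j : Fin r, j ≠ P y → G.Adj y (x j)) ∧
    -- (b) each part contains at most one special vertex
    (∀ y z : V,
      (∃ i', G.Adj (x i') y ∧ ∀ w, P w = P y → G.Adj (x i') w → w = y) →
      (∃ j', G.Adj (x j') z ∧ ∀ w, P w = P z → G.Adj (x j') w → w = z) →
      P y = P z → y = z) :=
  stmt_16_general r G P x hpart hfree hsat hx hind
end

section
/- Let r ≥ 4 and let G be a K_r-partite-saturated r-partite graph with parts V_1,...,V_r containing an independent set X = {x_1,...,x_r} with x_i ∈ V_i. The special degree of a vertex y outside X is the number of indices i such that y is the unique neighbor of x_i in its part. Then the number of vertices of special degree at least 2 is at most r - 2. -/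
/-!
For `a ≠ b`, saturation turns the non-edge `x a x b` into an `r`-clique of `G + x a x b`, which
meets every part exactly once; so it contains every vertex that is the only neighbour of `x a`
(or of `x b`) in a part other than those of `x a` and `x b`, and all its pairs other than
`x a x b` are edges of `G`. Choosing `a, b` suitably, any two vertices of special degree at least
two lie in such a clique, hence these vertices form a clique `D` of `G` with one vertex per part.
For a part `m` that `D` misses, `x m` is adjacent to all of `D` by the same argument, so `D ∪ {x m}`
is a clique and `K_r`-freeness gives `|D| + 1 < r`.
-/

namespace SimpleGraph

variable {V ι : Type*} {G : SimpleGraph V}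

structure IsPartiteSaturated {r : ℕ} (G : SimpleGraph V) (P : V → Fin r) : Prop where
  partite : ∀ u v, G.Adj u v → P u ≠ P v
  cliqueFree : G.CliqueFree r
  not_cliqueFree_sup_edge : ∀ u v, P u ≠ P v → ¬ G.Adj u v → ¬ (G ⊔ edge u v).CliqueFree r

def IsOnlyNeighborInPart (G : SimpleGraph V) (P : V → ι) (v y : V) : Prop :=
  G.Adj v y ∧ ∀ z, P z = P y → G.Adj v z → z = y

lemma IsClique.injOn_of_partite {P : V → ι} (hP : ∀ u v, G.Adj u v → P u ≠ P v) {s : Set V}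
    (hs : G.IsClique s) : Set.InjOn P s :=
  fun u hu v hv h ↦ by_contra fun hne ↦ hP u v (hs hu hv hne) h

lemma IsNClique.exists_mem_part_eq [Fintype ι] {P : V → ι} (hP : ∀ u v, G.Adj u v → P u ≠ P v)
    {t : Finset V} (ht : G.IsNClique (Fintype.card ι) t) (j : ι) : ∃ z ∈ t, P z = j := by
  classical
  have himage : t.image P = Finset.univ := Finset.eq_univ_of_card _ <| by
    rw [Finset.card_image_of_injOn (ht.isClique.injOn_of_partite hP), ht.card_eq]
  simpa using (himage.symm ▸ Finset.mem_univ j : j ∈ t.image P)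

lemma IsClique.adj_of_sup_edge {v w u u' : V} {s : Set V} (hs : (G ⊔ edge v w).IsClique s)
    (hu : u ∈ s) (hu' : u' ∈ s) (hne : u ≠ u') (hv : u ≠ v) (hw : u ≠ w) : G.Adj u u' :=
  (hs hu hu' hne).resolve_right fun h ↦ by rw [edge_adj] at h; tauto

lemma IsOnlyNeighborInPart.mem_of_isClique_sup_edge {P : V → ι}
    (hP : ∀ u v, G.Adj u v → P u ≠ P v) {u v y : V} {t : Set V}
    (ht : (G ⊔ edge u v).IsClique t) (hu : u ∈ t) (hparts : ∀ j, ∃ z ∈ t, P z = j)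
    (hy : G.IsOnlyNeighborInPart P u y) (hyv : P y ≠ P v) : y ∈ t := by
  obtain ⟨z, hz, hzy⟩ := hparts (P y)
  have hzu : z ≠ u := fun h ↦ hP u y hy.1 (h ▸ hzy)
  have hzv : z ≠ v := fun h ↦ hyv (h ▸ hzy.symm)
  exact hy.2 z hzy (ht.adj_of_sup_edge hz hu hzu hzu hzv).symm ▸ hz

lemma IsClique.ncard_le_sub_two [Finite V] {r : ℕ} {P : V → Fin r}
    (hP : ∀ u v, G.Adj u v → P u ≠ P v) (hfree : G.CliqueFree r) {D : Set V} (hD : G.IsClique D)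
    (hext : ∀ m, (∀ y ∈ D, P y ≠ m) → ∃ v ∉ D, ∀ y ∈ D, G.Adj v y) : D.ncard ≤ r - 2 := by
  classical
  obtain ⟨s, rfl⟩ := D.toFinite.exists_finset_coe
  rw [Set.ncard_coe_finset]
  have hsr : s.card < r := by
    by_contra! h
    exact hfree.mono h s ⟨hD, rfl⟩
  obtain ⟨m, -, hm⟩ := Finset.exists_mem_notMem_of_card_lt_card (s := s.image P)
    (t := Finset.univ) (by rwa [Finset.card_image_of_injOn (hD.injOn_of_partite hP),
      Finset.card_univ, Fintype.card_fin])
  obtain ⟨v, hvs, hv⟩ := hext m fun y hy h ↦ hm (Finset.mem_image.2 ⟨y, hy, h⟩)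
  have hclique : G.IsNClique (s.card + 1) (Insert.insert v s) :=
    ⟨by simpa using IsClique.insert hD fun y hy _ ↦ hv y hy, Finset.card_insert_of_notMem hvs⟩
  by_contra! hlt
  exact hfree.mono (by omega) _ hclique

namespace IsPartiteSaturated

variable {r : ℕ} {P : V → Fin r}

lemma exists_isClique_sup_edge (hG : G.IsPartiteSaturated P) {u v : V} (huv : P u ≠ P v)
    (hnadj : ¬ G.Adj u v) : ∃ t : Finset V, u ∈ t ∧ v ∈ t ∧ (G ⊔ edge u v).IsClique t ∧
      ∀ j, ∃ z ∈ t, P z = j := by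
  obtain ⟨t, ht⟩ := not_forall_not.1 (hG.not_cliqueFree_sup_edge u v huv hnadj)
  have hpart : ∀ a b, (G ⊔ edge u v).Adj a b → P a ≠ P b := by
    rintro a b (hab | hab)
    · exact hG.partite a b hab
    · rw [edge_adj] at hab
      obtain ⟨⟨rfl, rfl⟩ | ⟨rfl, rfl⟩, -⟩ := hab
      exacts [huv, huv.symm]
  refine ⟨t, hG.cliqueFree.mem_of_sup_edge_isNClique ht,
    hG.cliqueFree.mem_of_sup_edge_isNClique (edge_comm u v ▸ ht), ht.isClique, ?_⟩
  exact IsNClique.exists_mem_part_eq hpart (by simpa using ht)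

variable {x : Fin r → V}

lemma part_ne_of_isOnlyNeighborInPart (hG : G.IsPartiteSaturated P) (hx : ∀ i, P (x i) = i)
    {a : Fin r} {y : V} (hy : G.IsOnlyNeighborInPart P (x a) y) : P y ≠ a :=
  fun h ↦ hG.partite _ _ hy.1 (by rw [hx, h])

lemma adj_of_isOnlyNeighborInPart (hG : G.IsPartiteSaturated P) (hx : ∀ i, P (x i) = i)
    (hind : ∀ i j, ¬ G.Adj (x i) (x j)) {a b : Fin r} (hab : a ≠ b) {y y' : V}
    (hy : G.IsOnlyNeighborInPart P (x a) y)
    (hy' : G.IsOnlyNeighborInPart P (x a) y' ∨ G.IsOnlyNeighborInPart P (x b) y')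
    (hyb : P y ≠ b) (hy'a : P y' ≠ a) (hy'b : P y' ≠ b) (hyx : y ∉ Set.range x) (hne : y ≠ y') :
    G.Adj y y' := by
  obtain ⟨t, hat, hbt, ht, hparts⟩ :=
    hG.exists_isClique_sup_edge (u := x a) (v := x b) (by rwa [hx, hx]) (hind a b)
  have hyt : y ∈ t := hy.mem_of_isClique_sup_edge hG.partite ht hat hparts (by rwa [hx])
  have hy't : y' ∈ t := by
    rcases hy' with hy' | hy'
    · exact hy'.mem_of_isClique_sup_edge hG.partite ht hat hparts (by rwa [hx])
    · exact hy'.mem_of_isClique_sup_edge hG.partite (edge_comm (x a) (x b) ▸ ht) hbt hparts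
        (by rwa [hx])
  exact ht.adj_of_sup_edge hyt hy't hne (fun h ↦ hyx ⟨a, h.symm⟩) (fun h ↦ hyx ⟨b, h.symm⟩)

lemma adj_apply_of_isOnlyNeighborInPart (hG : G.IsPartiteSaturated P) (hx : ∀ i, P (x i) = i)
    (hind : ∀ i j, ¬ G.Adj (x i) (x j)) {a m : Fin r} (ham : a ≠ m) {y : V}
    (hy : G.IsOnlyNeighborInPart P (x a) y) (hym : P y ≠ m) (hyx : y ∉ Set.range x) :
    G.Adj y (x m) := by
  obtain ⟨t, hat, hmt, ht, hparts⟩ :=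
    hG.exists_isClique_sup_edge (u := x a) (v := x m) (by rwa [hx, hx]) (hind a m)
  have hyt : y ∈ t := hy.mem_of_isClique_sup_edge hG.partite ht hat hparts (by rwa [hx])
  exact ht.adj_of_sup_edge hyt hmt (fun h ↦ hyx ⟨m, h.symm⟩) (fun h ↦ hyx ⟨a, h.symm⟩)
    (fun h ↦ hyx ⟨m, h.symm⟩)

end IsPartiteSaturated

noncomputable def specialDegree {r : ℕ} (G : SimpleGraph V) (P : V → Fin r) (x : Fin r → V)
    (y : V) : ℕ :=
  {i | G.IsOnlyNeighborInPart P (x i) y}.ncard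

lemma IsPartiteSaturated.isClique_specialDegree {r : ℕ} {P : V → Fin r} {x : Fin r → V}
    (hG : G.IsPartiteSaturated P) (hr : 4 ≤ r) (hx : ∀ i, P (x i) = i)
    (hind : ∀ i j, ¬ G.Adj (x i) (x j)) :
    G.IsClique {y | y ∉ Set.range x ∧ 2 ≤ G.specialDegree P x y} := by
  rintro y ⟨hyx, hy2⟩ y' ⟨-, hy'2⟩ hne
  obtain ⟨a, hya, hay'⟩ := Set.exists_ne_of_one_lt_ncard hy2 (P y')
  obtain ⟨b, hy'b, hby⟩ := Set.exists_ne_of_one_lt_ncard hy'2 (P y)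
  have hy'b' : P y' ≠ b := hG.part_ne_of_isOnlyNeighborInPart hx hy'b
  by_cases hab : a = b
  · subst hab
    -- a third index, avoiding also the parts of `y` and `y'`, exists since `r ≥ 4`
    obtain ⟨d, -, hd⟩ := Finset.exists_mem_notMem_of_card_lt_card
      (s := {a, P y, P y'}) (t := Finset.univ)
      (Finset.card_le_three.trans_lt (by rw [Finset.card_univ, Fintype.card_fin]; omega))
    simp only [Finset.mem_insert, Finset.mem_singleton, not_or] at hd
    exact hG.adj_of_isOnlyNeighborInPart hx hind (Ne.symm hd.1) hya (Or.inl hy'b)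
      (Ne.symm hd.2.1) hay'.symm (Ne.symm hd.2.2) hyx hne
  · exact hG.adj_of_isOnlyNeighborInPart hx hind hab hya (Or.inr hy'b) hby.symm hay'.symm hy'b'
      hyx hne

end SimpleGraph

theorem stmt_17 {V : Type} [Fintype V] (r : ℕ) (hr : 4 ≤ r)
    (G : SimpleGraph V) (P : V → Fin r) (x : Fin r → V)
    (hpart : ∀ u v, G.Adj u v → P u ≠ P v)
    (hfree : G.CliqueFree r)
    (hsat : ∀ u v, P u ≠ P v → ¬ G.Adj u v →
      ¬ (G ⊔ SimpleGraph.fromEdgeSet {s(u, v)}).CliqueFree r)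
    (hx : ∀ i, P (x i) = i)
    (hind : ∀ i j, ¬ G.Adj (x i) (x j)) :
    {y : V | y ∉ Set.range x ∧
      2 ≤ {i : Fin r | G.Adj (x i) y ∧ ∀ z, P z = P y → G.Adj (x i) z → z = y}.ncard}.ncard
      ≤ r - 2 := by
  have hG : G.IsPartiteSaturated P := ⟨hpart, hfree, hsat⟩
  refine (hG.isClique_specialDegree hr hx hind).ncard_le_sub_two hpart hfree fun m hm ↦
    ⟨x m, fun h ↦ h.1 ⟨m, rfl⟩, fun y hy ↦ ?_⟩
  obtain ⟨a, hya, ham⟩ := Set.exists_ne_of_one_lt_ncard hy.2 m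
  exact (hG.adj_apply_of_isOnlyNeighborInPart hx hind ham hya (hm y hy) hy.1).symm
end
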